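/- arXiv:1901.05404 — 8 statements merged into one kernel-verified Lean document; each statement's English description precedes it below -/
import Mathlib

section
/- Fix natural numbers s, t ≥ 1 and consider the complex inner product space H = EuclideanSpace ℂ (Fin s × Fin t) with its standard inner product. Define the subspaces: H_sym = {a | a (i,j) = a (0,0) for all i, j}; H⁺ = {a | a (i,j) = a (i,0) for all i, j, and Σ_i a (i,0) = 0}; H⁻ = {a | a (i,j) = a (0,j) for all i, j, and Σ_j a (0,j) = 0}; H⁰ = {a | Σ_j a (i,j) = 0 for every i, and Σ_i a (i,j) = 0 for every j}. Then these four subspaces are pairwise orthogonal, their sum is all of H (H is their internal orthogonal direct sum), and their complex dimensions are dim H_sym = 1, dim H⁺ = s − 1, dim H⁻ = t − 1, dim H⁰ = (s − 1)(t − 1). -/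
open scoped InnerProductSpace

/-!
Let `V` and `W` be the subspaces of vectors depending only on the first, resp. second,
coordinate. Pulling back along the first projection identifies `𝕜^ι = 𝕜𝟙 ⊕ 𝟙ᗮ` with `V`, so
`V = H_sym ⊕ H⁺`, and likewise `W = H_sym ⊕ H⁻`. The adjoint of this pull-back is "sum along
rows", hence `Vᗮ` consists of the vectors with vanishing row sums, `Wᗮ` of those with vanishing
column sums, and `H⁰ = (V ⊔ W)ᗮ`. All orthogonality relations and `H = (V ⊔ W) ⊕ (V ⊔ W)ᗮ`
follow, and `dim H⁰ = st - (1 + (s - 1) + (t - 1)) = (s - 1)(t - 1)`.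
-/

open Module LinearMap

theorem Submodule.IsOrtho.finrank_sup {𝕜 E : Type*} [RCLike 𝕜] [NormedAddCommGroup E]
    [InnerProductSpace 𝕜 E] [FiniteDimensional 𝕜 E] {U V : Submodule 𝕜 E} (h : U ⟂ V) :
    finrank 𝕜 ↥(U ⊔ V) = finrank 𝕜 U + finrank 𝕜 V := by
  have := Submodule.finrank_sup_add_finrank_inf_eq U V
  rwa [disjoint_iff.1 h.disjoint, finrank_bot, add_zero] at this

noncomputable section

namespace Antitree

variable (𝕜 : Type*) [RCLike 𝕜] (ι κ : Type*)

def ones : EuclideanSpace 𝕜 ι := WithLp.toLp 2 1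

def liftFst : EuclideanSpace 𝕜 ι →ₗ[𝕜] EuclideanSpace 𝕜 (ι × κ) where
  toFun f := WithLp.toLp 2 fun p => f p.1
  map_add' _ _ := rfl
  map_smul' _ _ := rfl

def liftSnd : EuclideanSpace 𝕜 κ →ₗ[𝕜] EuclideanSpace 𝕜 (ι × κ) where
  toFun g := WithLp.toLp 2 fun p => g p.2
  map_add' _ _ := rfl
  map_smul' _ _ := rfl

def symPart : Submodule 𝕜 (EuclideanSpace 𝕜 (ι × κ)) := 𝕜 ∙ ones 𝕜 (ι × κ)

variable {𝕜 ι κ}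

@[simp] theorem ones_apply (i : ι) : ones 𝕜 ι i = 1 := rfl

@[simp] theorem liftFst_apply (f : EuclideanSpace 𝕜 ι) (p : ι × κ) :
    liftFst 𝕜 ι κ f p = f p.1 := rfl

@[simp] theorem liftSnd_apply (g : EuclideanSpace 𝕜 κ) (p : ι × κ) :
    liftSnd 𝕜 ι κ g p = g p.2 := rfl

theorem ones_ne_zero [Nonempty ι] : ones 𝕜 ι ≠ 0 := fun h =>
  one_ne_zero (congrFun (congrArg WithLp.ofLp h) (Classical.arbitrary ι))

theorem liftFst_injective [Nonempty κ] : Function.Injective (liftFst 𝕜 ι κ) := fun f f' h => by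
  ext i
  simpa using congrFun (congrArg WithLp.ofLp h) (i, Classical.arbitrary κ)

theorem liftSnd_injective [Nonempty ι] : Function.Injective (liftSnd 𝕜 ι κ) := fun g g' h => by
  ext j
  simpa using congrFun (congrArg WithLp.ofLp h) (Classical.arbitrary ι, j)

theorem map_liftFst_span_ones : (𝕜 ∙ ones 𝕜 ι).map (liftFst 𝕜 ι κ) = symPart 𝕜 ι κ := by
  rw [Submodule.map_span, Set.image_singleton]; rfl

theorem map_liftSnd_span_ones : (𝕜 ∙ ones 𝕜 κ).map (liftSnd 𝕜 ι κ) = symPart 𝕜 ι κ := by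
  rw [Submodule.map_span, Set.image_singleton]; rfl

theorem finrank_symPart [Nonempty ι] [Nonempty κ] : finrank 𝕜 (symPart 𝕜 ι κ) = 1 :=
  finrank_span_singleton ones_ne_zero

theorem mem_symPart_iff (i₀ : ι) (j₀ : κ) {a : EuclideanSpace 𝕜 (ι × κ)} :
    a ∈ symPart 𝕜 ι κ ↔ ∀ i j, a (i, j) = a (i₀, j₀) := by
  rw [symPart, Submodule.mem_span_singleton]
  constructor
  · rintro ⟨c, rfl⟩ i j
    simp
  · intro h
    exact ⟨a (i₀, j₀), by ext ⟨i, j⟩; simp [h i j]⟩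

variable [Fintype ι] [Fintype κ]

variable (𝕜 ι κ) in
def plusPart : Submodule 𝕜 (EuclideanSpace 𝕜 (ι × κ)) := (𝕜 ∙ ones 𝕜 ι)ᗮ.map (liftFst 𝕜 ι κ)

variable (𝕜 ι κ) in
def minusPart : Submodule 𝕜 (EuclideanSpace 𝕜 (ι × κ)) := (𝕜 ∙ ones 𝕜 κ)ᗮ.map (liftSnd 𝕜 ι κ)

variable (𝕜 ι κ) in
def zeroPart : Submodule 𝕜 (EuclideanSpace 𝕜 (ι × κ)) :=
  (range (liftFst 𝕜 ι κ) ⊔ range (liftSnd 𝕜 ι κ))ᗮ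

def rowSum (a : EuclideanSpace 𝕜 (ι × κ)) : EuclideanSpace 𝕜 ι :=
  WithLp.toLp 2 fun i => ∑ j, a (i, j)

def colSum (a : EuclideanSpace 𝕜 (ι × κ)) : EuclideanSpace 𝕜 κ :=
  WithLp.toLp 2 fun j => ∑ i, a (i, j)

omit [Fintype κ] in
theorem inner_ones_left (f : EuclideanSpace 𝕜 ι) : ⟪ones 𝕜 ι, f⟫_𝕜 = ∑ i, f i := by
  simp [PiLp.inner_apply]

theorem inner_liftFst_left (f : EuclideanSpace 𝕜 ι) (a : EuclideanSpace 𝕜 (ι × κ)) :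
    ⟪liftFst 𝕜 ι κ f, a⟫_𝕜 = ⟪f, rowSum a⟫_𝕜 := by
  simp [rowSum, PiLp.inner_apply, Fintype.sum_prod_type, Finset.sum_mul]

theorem inner_liftSnd_left (g : EuclideanSpace 𝕜 κ) (a : EuclideanSpace 𝕜 (ι × κ)) :
    ⟪liftSnd 𝕜 ι κ g, a⟫_𝕜 = ⟪g, colSum a⟫_𝕜 := by
  simp [colSum, PiLp.inner_apply, Fintype.sum_prod_type_right, Finset.sum_mul]

theorem mem_orthogonal_range_liftFst_iff {a : EuclideanSpace 𝕜 (ι × κ)} :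
    a ∈ (range (liftFst 𝕜 ι κ))ᗮ ↔ rowSum a = 0 := by
  simp only [Submodule.mem_orthogonal, mem_range, forall_exists_index, forall_apply_eq_imp_iff,
    inner_liftFst_left]
  exact ⟨fun h => inner_self_eq_zero.1 (h _), fun h f => by rw [h, inner_zero_right]⟩

theorem mem_orthogonal_range_liftSnd_iff {a : EuclideanSpace 𝕜 (ι × κ)} :
    a ∈ (range (liftSnd 𝕜 ι κ))ᗮ ↔ colSum a = 0 := by
  simp only [Submodule.mem_orthogonal, mem_range, forall_exists_index, forall_apply_eq_imp_iff,
    inner_liftSnd_left]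
  exact ⟨fun h => inner_self_eq_zero.1 (h _), fun h g => by rw [h, inner_zero_right]⟩

omit [Fintype ι] in
theorem rowSum_liftSnd (g : EuclideanSpace 𝕜 κ) :
    rowSum (liftSnd 𝕜 ι κ g) = ⟪ones 𝕜 κ, g⟫_𝕜 • ones 𝕜 ι := by
  ext i; simp [rowSum, inner_ones_left]

omit [Fintype κ] in
theorem colSum_liftFst (f : EuclideanSpace 𝕜 ι) :
    colSum (liftFst 𝕜 ι κ f) = ⟪ones 𝕜 ι, f⟫_𝕜 • ones 𝕜 κ := by
  ext j; simp [colSum, inner_ones_left]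

omit [Fintype κ] in
theorem range_liftFst : range (liftFst 𝕜 ι κ) = symPart 𝕜 ι κ ⊔ plusPart 𝕜 ι κ := by
  rw [← map_liftFst_span_ones, plusPart, ← Submodule.map_sup,
    Submodule.sup_orthogonal_of_hasOrthogonalProjection, Submodule.map_top]

omit [Fintype ι] in
theorem range_liftSnd : range (liftSnd 𝕜 ι κ) = symPart 𝕜 ι κ ⊔ minusPart 𝕜 ι κ := by
  rw [← map_liftSnd_span_ones, minusPart, ← Submodule.map_sup,
    Submodule.sup_orthogonal_of_hasOrthogonalProjection, Submodule.map_top]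

theorem range_liftFst_sup_range_liftSnd :
    range (liftFst 𝕜 ι κ) ⊔ range (liftSnd 𝕜 ι κ) =
      symPart 𝕜 ι κ ⊔ plusPart 𝕜 ι κ ⊔ minusPart 𝕜 ι κ := by
  rw [range_liftFst, range_liftSnd, ← sup_assoc, sup_right_comm _ _ (symPart 𝕜 ι κ), sup_idem]

theorem plusPart_le_orthogonal_range_liftSnd : plusPart 𝕜 ι κ ≤ (range (liftSnd 𝕜 ι κ))ᗮ := by
  rintro _ ⟨f, hf, rfl⟩
  rw [mem_orthogonal_range_liftSnd_iff, colSum_liftFst,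
    Submodule.mem_orthogonal_singleton_iff_inner_right.1 hf, zero_smul]

theorem minusPart_le_orthogonal_range_liftFst : minusPart 𝕜 ι κ ≤ (range (liftFst 𝕜 ι κ))ᗮ := by
  rintro _ ⟨g, hg, rfl⟩
  rw [mem_orthogonal_range_liftFst_iff, rowSum_liftSnd,
    Submodule.mem_orthogonal_singleton_iff_inner_right.1 hg, zero_smul]

theorem isOrtho_parts :
    symPart 𝕜 ι κ ⟂ plusPart 𝕜 ι κ ∧ symPart 𝕜 ι κ ⟂ minusPart 𝕜 ι κ ∧
      symPart 𝕜 ι κ ⟂ zeroPart 𝕜 ι κ ∧ plusPart 𝕜 ι κ ⟂ minusPart 𝕜 ι κ ∧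
      plusPart 𝕜 ι κ ⟂ zeroPart 𝕜 ι κ ∧ minusPart 𝕜 ι κ ⟂ zeroPart 𝕜 ι κ := by
  have hFst := Submodule.isOrtho_orthogonal_right (range (liftFst 𝕜 ι κ))
  have hSnd := Submodule.isOrtho_orthogonal_right (range (liftSnd 𝕜 ι κ))
  have hsF : symPart 𝕜 ι κ ≤ range (liftFst 𝕜 ι κ) := by rw [range_liftFst]; exact le_sup_left
  have hpF : plusPart 𝕜 ι κ ≤ range (liftFst 𝕜 ι κ) := by rw [range_liftFst]; exact le_sup_right
  have hsS : symPart 𝕜 ι κ ≤ range (liftSnd 𝕜 ι κ) := by rw [range_liftSnd]; exact le_sup_left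
  have hmS : minusPart 𝕜 ι κ ≤ range (liftSnd 𝕜 ι κ) := by rw [range_liftSnd]; exact le_sup_right
  have hzF : zeroPart 𝕜 ι κ ≤ (range (liftFst 𝕜 ι κ))ᗮ := Submodule.orthogonal_le le_sup_left
  have hzS : zeroPart 𝕜 ι κ ≤ (range (liftSnd 𝕜 ι κ))ᗮ := Submodule.orthogonal_le le_sup_right
  exact ⟨hSnd.mono hsS plusPart_le_orthogonal_range_liftSnd,
    hFst.mono hsF minusPart_le_orthogonal_range_liftFst, hFst.mono hsF hzF,
    hFst.mono hpF minusPart_le_orthogonal_range_liftFst, hFst.mono hpF hzF, hSnd.mono hmS hzS⟩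

theorem sup_parts_eq_top :
    symPart 𝕜 ι κ ⊔ plusPart 𝕜 ι κ ⊔ minusPart 𝕜 ι κ ⊔ zeroPart 𝕜 ι κ = ⊤ := by
  rw [zeroPart, range_liftFst_sup_range_liftSnd,
    Submodule.sup_orthogonal_of_hasOrthogonalProjection]

omit [Fintype κ] in
theorem finrank_orthogonal_span_ones [Nonempty ι] :
    finrank 𝕜 (𝕜 ∙ ones 𝕜 ι)ᗮ = Fintype.card ι - 1 := by
  have := Submodule.finrank_add_finrank_orthogonal (𝕜 ∙ ones 𝕜 ι)
  rw [finrank_span_singleton ones_ne_zero, finrank_euclideanSpace] at this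
  omega

omit [Fintype κ] in
theorem finrank_plusPart [Nonempty ι] [Nonempty κ] :
    finrank 𝕜 (plusPart 𝕜 ι κ) = Fintype.card ι - 1 := by
  rw [plusPart, ← (Submodule.equivMapOfInjective _ liftFst_injective _).finrank_eq,
    finrank_orthogonal_span_ones]

omit [Fintype ι] in
theorem finrank_minusPart [Nonempty ι] [Nonempty κ] :
    finrank 𝕜 (minusPart 𝕜 ι κ) = Fintype.card κ - 1 := by
  rw [minusPart, ← (Submodule.equivMapOfInjective _ liftSnd_injective _).finrank_eq,
    finrank_orthogonal_span_ones]

theorem finrank_zeroPart [Nonempty ι] [Nonempty κ] :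
    finrank 𝕜 (zeroPart 𝕜 ι κ) = (Fintype.card ι - 1) * (Fintype.card κ - 1) := by
  obtain ⟨hsp, hsm, -, hpm, -, -⟩ := isOrtho_parts (𝕜 := 𝕜) (ι := ι) (κ := κ)
  have := Submodule.finrank_add_finrank_orthogonal
    (range (liftFst 𝕜 ι κ) ⊔ range (liftSnd 𝕜 ι κ))
  rw [← zeroPart, range_liftFst_sup_range_liftSnd,
    (Submodule.isOrtho_sup_left.2 ⟨hsm, hpm⟩).finrank_sup, hsp.finrank_sup, finrank_symPart,
    finrank_plusPart, finrank_minusPart, finrank_euclideanSpace, Fintype.card_prod] at this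
  obtain ⟨m, hm⟩ := Nat.exists_eq_add_one.2 (Fintype.card_pos (α := ι))
  obtain ⟨n, hn⟩ := Nat.exists_eq_add_one.2 (Fintype.card_pos (α := κ))
  rw [hm, hn] at this ⊢
  simp only [Nat.add_sub_cancel] at this ⊢
  nlinarith

omit [Fintype κ] in
theorem mem_plusPart_iff (j₀ : κ) {a : EuclideanSpace 𝕜 (ι × κ)} :
    a ∈ plusPart 𝕜 ι κ ↔ (∀ i j, a (i, j) = a (i, j₀)) ∧ ∑ i, a (i, j₀) = 0 := by
  simp only [plusPart, Submodule.mem_map, Submodule.mem_orthogonal_singleton_iff_inner_right,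
    inner_ones_left]
  constructor
  · rintro ⟨f, hf, rfl⟩
    exact ⟨fun _ _ => rfl, hf⟩
  · rintro ⟨h, hsum⟩
    exact ⟨WithLp.toLp 2 fun i => a (i, j₀), hsum, by ext ⟨i, j⟩; exact (h i j).symm⟩

omit [Fintype ι] in
theorem mem_minusPart_iff (i₀ : ι) {a : EuclideanSpace 𝕜 (ι × κ)} :
    a ∈ minusPart 𝕜 ι κ ↔ (∀ i j, a (i, j) = a (i₀, j)) ∧ ∑ j, a (i₀, j) = 0 := by
  simp only [minusPart, Submodule.mem_map, Submodule.mem_orthogonal_singleton_iff_inner_right,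
    inner_ones_left]
  constructor
  · rintro ⟨g, hg, rfl⟩
    exact ⟨fun _ _ => rfl, hg⟩
  · rintro ⟨h, hsum⟩
    exact ⟨WithLp.toLp 2 fun j => a (i₀, j), hsum, by ext ⟨i, j⟩; exact (h i j).symm⟩

theorem mem_zeroPart_iff {a : EuclideanSpace 𝕜 (ι × κ)} :
    a ∈ zeroPart 𝕜 ι κ ↔ (∀ i, ∑ j, a (i, j) = 0) ∧ ∀ j, ∑ i, a (i, j) = 0 := by
  rw [zeroPart, ← Submodule.inf_orthogonal, Submodule.mem_inf, mem_orthogonal_range_liftFst_iff,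
    mem_orthogonal_range_liftSnd_iff]
  simp [rowSum, colSum, funext_iff]

end Antitree

end

open Antitree

/-- The orthogonal decomposition of the fiber space
`H = ℂ^{s·t}` (identified with `EuclideanSpace ℂ (Fin s × Fin t)`) into the
radially symmetric part, the `+`/`-` parts and the `0` part:
the four subspaces are pairwise orthogonal, their (lattice) sum is everything,
and their dimensions are `1`, `s-1`, `t-1`, `(s-1)(t-1)`. -/
theorem antitree_fiber_decomposition (s t : ℕ) (hs : 0 < s) (ht : 0 < t)
    (Hsym Hp Hm H0 : Submodule ℂ (EuclideanSpace ℂ (Fin s × Fin t)))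
    (hHsym : ∀ a : EuclideanSpace ℂ (Fin s × Fin t),
      a ∈ Hsym ↔ ∀ i j, a (i, j) = a (⟨0, hs⟩, ⟨0, ht⟩))
    (hHp : ∀ a : EuclideanSpace ℂ (Fin s × Fin t),
      a ∈ Hp ↔ (∀ i j, a (i, j) = a (i, ⟨0, ht⟩)) ∧ ∑ i, a (i, (⟨0, ht⟩ : Fin t)) = 0)
    (hHm : ∀ a : EuclideanSpace ℂ (Fin s × Fin t),
      a ∈ Hm ↔ (∀ i j, a (i, j) = a (⟨0, hs⟩, j)) ∧ ∑ j, a ((⟨0, hs⟩ : Fin s), j) = 0)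
    (hH0 : ∀ a : EuclideanSpace ℂ (Fin s × Fin t),
      a ∈ H0 ↔ (∀ i, ∑ j, a (i, j) = 0) ∧ (∀ j, ∑ i, a (i, j) = 0)) :
    (Submodule.IsOrtho Hsym Hp ∧ Submodule.IsOrtho Hsym Hm ∧ Submodule.IsOrtho Hsym H0 ∧
      Submodule.IsOrtho Hp Hm ∧ Submodule.IsOrtho Hp H0 ∧ Submodule.IsOrtho Hm H0) ∧
    Hsym ⊔ Hp ⊔ Hm ⊔ H0 = ⊤ ∧
    Module.finrank ℂ Hsym = 1 ∧ Module.finrank ℂ Hp = s - 1 ∧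
    Module.finrank ℂ Hm = t - 1 ∧ Module.finrank ℂ H0 = (s - 1) * (t - 1) := by
  have : Nonempty (Fin s) := ⟨⟨0, hs⟩⟩
  have : Nonempty (Fin t) := ⟨⟨0, ht⟩⟩
  obtain rfl : Hsym = symPart ℂ (Fin s) (Fin t) :=
    Submodule.ext fun a => (hHsym a).trans (mem_symPart_iff _ _).symm
  obtain rfl : Hp = plusPart ℂ (Fin s) (Fin t) :=
    Submodule.ext fun a => (hHp a).trans (mem_plusPart_iff _).symm
  obtain rfl : Hm = minusPart ℂ (Fin s) (Fin t) :=
    Submodule.ext fun a => (hHm a).trans (mem_minusPart_iff _).symm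
  obtain rfl : H0 = zeroPart ℂ (Fin s) (Fin t) :=
    Submodule.ext fun a => (hH0 a).trans mem_zeroPart_iff.symm
  refine ⟨isOrtho_parts, sup_parts_eq_top, finrank_symPart, ?_⟩
  simp only [finrank_plusPart, finrank_minusPart, finrank_zeroPart, Fintype.card_fin, and_self]
end

section
/- Let a : ℕ → ℝ satisfy a n ≥ 1 for all n and let ℓ : ℕ → ℝ satisfy ℓ n > 0 for all n. Then the series Σ_{n=0}^∞ a_n ℓ_n converges if and only if the series Σ_{n=0}^∞ a_n ℓ_n (Σ_{k=0}^n ℓ_k / a_k)² converges. -/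
/-!
The partial sums `Sₙ = ∑_{k ≤ n} ℓₖ / aₖ` are squeezed between two positive constants whenever
`∑ aₙ ℓₙ` converges: from below by `ℓ₀ / a₀`, and from above by `∑ ℓₖ / aₖ`, which converges
because `ℓₖ / aₖ ≤ aₖ ℓₖ` for `aₖ ≥ 1`. Multiplying a nonnegative series termwise by a sequence
bounded between positive constants does not affect its convergence.
-/

section Comparison

variable {ι : Type*} {f g : ι → ℝ}

theorem Summable.mul_of_nonneg_of_le {C : ℝ} (hf : Summable f) (hf₀ : ∀ i, 0 ≤ f i)
    (hg₀ : ∀ i, 0 ≤ g i) (hgC : ∀ i, g i ≤ C) : Summable fun i => f i * g i :=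
  (hf.mul_right C).of_nonneg_of_le (fun i => mul_nonneg (hf₀ i) (hg₀ i))
    fun i => mul_le_mul_of_nonneg_left (hgC i) (hf₀ i)

theorem Summable.of_mul_of_le {c : ℝ} (h : Summable fun i => f i * g i) (hf₀ : ∀ i, 0 ≤ f i)
    (hc : 0 < c) (hcg : ∀ i, c ≤ g i) : Summable f :=
  (h.div_const c).of_nonneg_of_le hf₀ fun i => by
    rw [le_div_iff₀ hc]
    exact mul_le_mul_of_nonneg_left (hcg i) (hf₀ i)

end Comparison

theorem div_le_mul_of_one_le {a x : ℝ} (ha : 1 ≤ a) (hx : 0 ≤ x) : x / a ≤ a * x :=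
  calc x / a ≤ x := div_le_self hx ha
    _ ≤ a * x := le_mul_of_one_le_left hx ha

/-- For `a n ≥ 1` and `ℓ n > 0`, the series `Σ aₙ ℓₙ` converges
iff the series `Σ aₙ ℓₙ (Σ_{k ≤ n} ℓₖ/aₖ)²` converges.  (Analytic core of the
self-adjointness criterion, Theorem 4.1(i).) -/
theorem summable_iff_summable_mul_sq (a ℓ : ℕ → ℝ)
    (ha : ∀ n, 1 ≤ a n) (hℓ : ∀ n, 0 < ℓ n) :
    Summable (fun n => a n * ℓ n) ↔
      Summable (fun n => a n * ℓ n * (∑ k ∈ Finset.range (n + 1), ℓ k / a k) ^ 2) := by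
  have ha₀ n : 0 < a n := one_pos.trans_le (ha n)
  have haℓ n : 0 ≤ a n * ℓ n := (mul_pos (ha₀ n) (hℓ n)).le
  have hw n : 0 ≤ ℓ n / a n := div_nonneg (hℓ n).le (ha₀ n).le
  have hS n : 0 ≤ ∑ k ∈ Finset.range (n + 1), ℓ k / a k := Finset.sum_nonneg fun k _ => hw k
  constructor
  · intro h
    have hw_sum : Summable fun k => ℓ k / a k :=
      h.of_nonneg_of_le hw fun k => div_le_mul_of_one_le (ha k) (hℓ k).le
    exact h.mul_of_nonneg_of_le haℓ (fun n => sq_nonneg _) fun n =>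
      pow_le_pow_left₀ (hS n) (hw_sum.sum_le_tsum _ fun k _ => hw k) 2
  · intro h
    have hw₀ : 0 < ℓ 0 / a 0 := div_pos (hℓ 0) (ha₀ 0)
    refine h.of_mul_of_le haℓ (pow_pos hw₀ 2) fun n => ?_
    have hS₀ : ℓ 0 / a 0 ≤ ∑ k ∈ Finset.range (n + 1), ℓ k / a k :=
      Finset.single_le_sum (f := fun k => ℓ k / a k) (fun k _ => hw k) (by simp)
    exact pow_le_pow_left₀ hw₀.le hS₀ 2
end

section
/- For every n ∈ ℕ and every x ∈ [t n, t (n+1)): (∫_{(0,x)} μ(s) ds) · (∫_{(x,L)} μ(s)⁻¹ ds) ≤ (Σ_{k=0}^n s_k s_{k+1} ℓ_k) · (Σ_{k=n}^∞ ℓ_k/(s_k s_{k+1})). Moreover, for the midpoint x_n = (t n + t (n+1))/2 one has (∫_{(0,x_n)} μ(s) ds) · (∫_{(x_n,L)} μ(s)⁻¹ ds) ≥ (1/4) (Σ_{k=0}^n s_k s_{k+1} ℓ_k) · (Σ_{k=n}^∞ ℓ_k/(s_k s_{k+1})). Both inequalities hold in [0,∞]. -/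
/-!
`μ` is a step function on the partition `t`, so both factors of `Φ(x)` can be computed cell by
cell. `∫₀ˣ μ` is the sum of the masses `sₖ sₖ₊₁ ℓₖ` of the cells to the left of `x` plus the part
of the cell `[tₙ, tₙ₊₁)` below `x`, and `∫ₓᴸ 1/μ` is the part of that cell above `x` plus the tail
of the masses `ℓₖ / (sₖ sₖ₊₁)`. Enlarging the partial cell to the full one gives the upper bound;
at the midpoint the partial cell is exactly half a cell, so each factor is at least half of its
discrete counterpart.
-/

open MeasureTheory Set
open scoped ENNReal

theorem ENNReal.inv_two_mul_add_le (a b : ℝ≥0∞) : 2⁻¹ * (a + b) ≤ a + 2⁻¹ * b := by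
  rw [mul_add]
  gcongr
  exact mul_le_of_le_one_left zero_le (ENNReal.inv_le_one.2 one_le_two)

theorem ENNReal.ofReal_inv_two_mul (d : ℝ) :
    ENNReal.ofReal (2⁻¹ * d) = 2⁻¹ * ENNReal.ofReal d := by
  rw [ENNReal.ofReal_mul (by norm_num), ENNReal.ofReal_inv_of_pos two_pos, ENNReal.ofReal_ofNat]

theorem setOf_lt_and_ofReal_lt_iSup {t : ℕ → ℝ} {x : ℝ} (hx : 0 ≤ x) :
    {y : ℝ | x < y ∧ ENNReal.ofReal y < ⨆ N, ENNReal.ofReal (t N)} = ⋃ N, Ioo x (t N) := by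
  ext y
  simp only [mem_ofPred_eq, lt_iSup_iff, ENNReal.ofReal_lt_ofReal_iff', mem_iUnion, mem_Ioo]
  constructor
  · rintro ⟨hxy, N, hyN, -⟩
    exact ⟨N, hxy, hyN⟩
  · rintro ⟨N, hxy, hyN⟩
    exact ⟨hxy, N, hyN, by linarith⟩

theorem tsum_ofReal_sub_eq_iSup_ofReal {t : ℕ → ℝ} (ht : Monotone t) (ht0 : t 0 = 0) :
    ∑' k, ENNReal.ofReal (t (k + 1) - t k) = ⨆ N, ENNReal.ofReal (t N) := by
  rw [ENNReal.tsum_eq_iSup_nat]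
  congr! with N
  rw [← ENNReal.ofReal_sum_of_nonneg fun k _ => sub_nonneg.2 (ht k.le_succ),
    Finset.sum_range_sub, ht0, sub_zero]

section StepFunction

variable {t : ℕ → ℝ} {f : ℝ → ℝ≥0∞} {c : ℕ → ℝ≥0∞}

theorem setLIntegral_eq_mul_volume_of_subset_Ico {k : ℕ} {s : Set ℝ}
    (hf : ∀ y ∈ Ico (t k) (t (k + 1)), f y = c k) (hs : MeasurableSet s)
    (hsk : s ⊆ Ico (t k) (t (k + 1))) :
    ∫⁻ y in s, f y = c k * volume s := by
  rw [setLIntegral_congr_fun hs fun y hy => hf y (hsk hy), setLIntegral_const]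

theorem setLIntegral_Ico_eq_sum (ht : Monotone t)
    (hf : ∀ k, ∀ y ∈ Ico (t k) (t (k + 1)), f y = c k) (m N : ℕ) :
    ∫⁻ y in Ico (t m) (t (m + N)), f y =
      ∑ k ∈ Finset.range N, c (m + k) * ENNReal.ofReal (t (m + k + 1) - t (m + k)) := by
  induction N with
  | zero => simp
  | succ N ih =>
    rw [Finset.sum_range_succ, ← ih, ← add_assoc,
      ← Ico_union_Ico_eq_Ico (ht (m.le_add_right N)) (ht (m + N).le_succ),
      lintegral_union measurableSet_Ico Ico_disjoint_Ico_same,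
      setLIntegral_eq_mul_volume_of_subset_Ico (hf _) measurableSet_Ico subset_rfl,
      Real.volume_Ico]

theorem setLIntegral_iUnion_Ico_eq_tsum (ht : Monotone t)
    (hf : ∀ k, ∀ y ∈ Ico (t k) (t (k + 1)), f y = c k) (m : ℕ) :
    ∫⁻ y in ⋃ N, Ico (t m) (t (m + N)), f y =
      ∑' k, c (m + k) * ENNReal.ofReal (t (m + k + 1) - t (m + k)) := by
  have hmono : Monotone fun N => Ico (t m) (t (m + N)) := fun N N' h =>
    Ico_subset_Ico_right (ht (by omega))
  rw [setLIntegral_iUnion_of_directed _ hmono.directed_le, ENNReal.tsum_eq_iSup_nat]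
  simp only [setLIntegral_Ico_eq_sum ht hf]

theorem setLIntegral_Ico_zero_le_sum (ht : Monotone t)
    (hf : ∀ k, ∀ y ∈ Ico (t k) (t (k + 1)), f y = c k) {x : ℝ} {n : ℕ} (hx : x ≤ t (n + 1)) :
    ∫⁻ y in Ico (t 0) x, f y ≤
      ∑ k ∈ Finset.range (n + 1), c k * ENNReal.ofReal (t (k + 1) - t k) := by
  calc ∫⁻ y in Ico (t 0) x, f y ≤ ∫⁻ y in Ico (t 0) (t (0 + (n + 1))), f y :=
        lintegral_mono_set (Ico_subset_Ico_right (by rwa [zero_add]))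
    _ = _ := by rw [setLIntegral_Ico_eq_sum ht hf]; simp only [zero_add]

theorem setLIntegral_iUnion_Ioo_le_tsum (ht : Monotone t)
    (hf : ∀ k, ∀ y ∈ Ico (t k) (t (k + 1)), f y = c k) {x : ℝ} {n : ℕ} (hx : t n ≤ x) :
    ∫⁻ y in ⋃ N, Ioo x (t N), f y ≤
      ∑' k, c (n + k) * ENNReal.ofReal (t (n + k + 1) - t (n + k)) := by
  rw [← setLIntegral_iUnion_Ico_eq_tsum ht hf]
  refine lintegral_mono_set (iUnion_subset fun N y hy => mem_iUnion.2 ⟨N - n, ?_⟩)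
  have hnN : n ≤ N := by
    by_contra! h
    linarith [hy.1, hy.2, ht h.le]
  rw [Nat.add_sub_cancel' hnN]
  exact ⟨hx.trans hy.1.le, hy.2⟩

theorem inv_two_mul_sum_le_setLIntegral_Ico_zero_midpoint (ht : Monotone t)
    (hf : ∀ k, ∀ y ∈ Ico (t k) (t (k + 1)), f y = c k) (n : ℕ) :
    2⁻¹ * ∑ k ∈ Finset.range (n + 1), c k * ENNReal.ofReal (t (k + 1) - t k) ≤
      ∫⁻ y in Ico (t 0) ((t n + t (n + 1)) / 2), f y := by
  have htn := ht n.le_succ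
  have hhead := setLIntegral_Ico_eq_sum ht hf 0 n
  simp only [zero_add] at hhead
  rw [← Ico_union_Ico_eq_Ico (ht (Nat.zero_le n)) (by linarith : t n ≤ (t n + t (n + 1)) / 2),
    lintegral_union measurableSet_Ico Ico_disjoint_Ico_same, hhead,
    setLIntegral_eq_mul_volume_of_subset_Ico (hf n) measurableSet_Ico
      (Ico_subset_Ico_right (by linarith)),
    Real.volume_Ico, Finset.sum_range_succ,
    show (t n + t (n + 1)) / 2 - t n = 2⁻¹ * (t (n + 1) - t n) by ring,
    ENNReal.ofReal_inv_two_mul, mul_left_comm]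
  exact ENNReal.inv_two_mul_add_le _ _

theorem inv_two_mul_tsum_le_setLIntegral_iUnion_Ioo_midpoint (ht : Monotone t)
    (hf : ∀ k, ∀ y ∈ Ico (t k) (t (k + 1)), f y = c k) {n : ℕ} (hn : t n < t (n + 1)) :
    2⁻¹ * ∑' k, c (n + k) * ENNReal.ofReal (t (n + k + 1) - t (n + k)) ≤
      ∫⁻ y in ⋃ N, Ioo ((t n + t (n + 1)) / 2) (t N), f y := by
  set m := (t n + t (n + 1)) / 2 with hm_def
  have hm : t n < m ∧ m < t (n + 1) := by constructor <;> linarith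
  have hsub : Ioo m (t (n + 1)) ∪ ⋃ N, Ico (t (n + 1)) (t (n + 1 + N)) ⊆ ⋃ N, Ioo m (t N) := by
    rintro y (hy | hy)
    · exact mem_iUnion.2 ⟨n + 1, hy⟩
    · obtain ⟨N, hy⟩ := mem_iUnion.1 hy
      exact mem_iUnion.2 ⟨n + 1 + N, hm.2.trans_le hy.1, hy.2⟩
  have hdisj : Disjoint (Ioo m (t (n + 1))) (⋃ N, Ico (t (n + 1)) (t (n + 1 + N))) :=
    disjoint_iUnion_right.2 fun _ => Ico_disjoint_Ico_same.mono_left Ioo_subset_Ico_self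
  refine le_trans ?_ (lintegral_mono_set hsub)
  rw [lintegral_union (MeasurableSet.iUnion fun _ => measurableSet_Ico) hdisj,
    setLIntegral_iUnion_Ico_eq_tsum ht hf,
    setLIntegral_eq_mul_volume_of_subset_Ico (hf n) measurableSet_Ioo
      (Ioo_subset_Ico_self.trans (Ico_subset_Ico_left hm.1.le)),
    Real.volume_Ioo, tsum_eq_zero_add' ENNReal.summable,
    show t (n + 1) - m = 2⁻¹ * (t (n + 1) - t n) by rw [hm_def]; ring,
    ENNReal.ofReal_inv_two_mul, mul_left_comm]
  simp only [add_zero, ← add_assoc, Nat.add_right_comm n 1]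
  rw [add_comm (c n * _), add_comm (2⁻¹ * _)]
  exact ENNReal.inv_two_mul_add_le _ _

end StepFunction

theorem kacKrein_function_estimates_general (s : ℕ → ℕ)
    (ℓ : ℕ → ℝ) (hℓ : ∀ n, 0 < ℓ n)
    (t : ℕ → ℝ) (ht0 : t 0 = 0) (htrec : ∀ n, t (n + 1) = t n + ℓ n)
    (L : ℝ≥0∞) (hL : L = ∑' n, ENNReal.ofReal (ℓ n))
    (μ : ℝ → ℝ)
    (hμ : ∀ n : ℕ, ∀ x ∈ Set.Ico (t n) (t (n + 1)), μ x = (s n : ℝ) * (s (n + 1) : ℝ)) :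
    (∀ n : ℕ, ∀ x ∈ Set.Ico (t n) (t (n + 1)),
      (∫⁻ y in Set.Ioo 0 x, ENNReal.ofReal (μ y)) *
        (∫⁻ y in {y : ℝ | x < y ∧ ENNReal.ofReal y < L}, ENNReal.ofReal ((μ y)⁻¹)) ≤
      (∑ k ∈ Finset.range (n + 1), ENNReal.ofReal ((s k : ℝ) * (s (k + 1) : ℝ) * ℓ k)) *
        (∑' k : ℕ, ENNReal.ofReal (ℓ (n + k) / ((s (n + k) : ℝ) * (s (n + k + 1) : ℝ))))) ∧
    (∀ n : ℕ,
      (1 / 4 : ℝ≥0∞) *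
        ((∑ k ∈ Finset.range (n + 1), ENNReal.ofReal ((s k : ℝ) * (s (k + 1) : ℝ) * ℓ k)) *
          (∑' k : ℕ, ENNReal.ofReal (ℓ (n + k) / ((s (n + k) : ℝ) * (s (n + k + 1) : ℝ))))) ≤
      (∫⁻ y in Set.Ioo 0 ((t n + t (n + 1)) / 2), ENNReal.ofReal (μ y)) *
        (∫⁻ y in {y : ℝ | (t n + t (n + 1)) / 2 < y ∧ ENNReal.ofReal y < L},
          ENNReal.ofReal ((μ y)⁻¹))) := by
  have hlen (k : ℕ) : t (k + 1) - t k = ℓ k := by rw [htrec]; ring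
  have ht : Monotone t := monotone_nat_of_le_succ fun k => by linarith [hlen k, hℓ k]
  have ht_nonneg (k : ℕ) : 0 ≤ t k := ht0 ▸ ht k.zero_le
  have hL' : L = ⨆ N, ENNReal.ofReal (t N) := by
    simp only [hL, ← hlen, tsum_ofReal_sub_eq_iSup_ofReal ht ht0]
  have hμ_step (k : ℕ) : ∀ y ∈ Ico (t k) (t (k + 1)),
      ENNReal.ofReal (μ y) = ENNReal.ofReal (s k * s (k + 1)) := fun y hy => by rw [hμ k y hy]
  have hμinv_step (k : ℕ) : ∀ y ∈ Ico (t k) (t (k + 1)),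
      ENNReal.ofReal (μ y)⁻¹ = ENNReal.ofReal (s k * s (k + 1))⁻¹ := fun y hy => by rw [hμ k y hy]
  have hmass (k : ℕ) : ENNReal.ofReal (s k * s (k + 1) * ℓ k) =
      ENNReal.ofReal (s k * s (k + 1)) * ENNReal.ofReal (t (k + 1) - t k) := by
    rw [hlen, ENNReal.ofReal_mul (by positivity)]
  have hmass_inv (k : ℕ) : ENNReal.ofReal (ℓ k / (s k * s (k + 1))) =
      ENNReal.ofReal (s k * s (k + 1))⁻¹ * ENNReal.ofReal (t (k + 1) - t k) := by
    rw [hlen, div_eq_inv_mul, ENNReal.ofReal_mul (by positivity)]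
  have hIoo (g : ℝ → ℝ≥0∞) (x : ℝ) : ∫⁻ y in Ioo 0 x, g y = ∫⁻ y in Ico (t 0) x, g y := by
    rw [ht0]; exact setLIntegral_congr Ioo_ae_eq_Ico
  simp only [hmass, hmass_inv, hIoo, hL']
  refine ⟨fun n x hx => ?_, fun n => ?_⟩
  · rw [setOf_lt_and_ofReal_lt_iSup ((ht_nonneg n).trans hx.1)]
    exact mul_le_mul' (setLIntegral_Ico_zero_le_sum ht hμ_step hx.2.le)
      (setLIntegral_iUnion_Ioo_le_tsum ht hμinv_step hx.1)
  · rw [setOf_lt_and_ofReal_lt_iSup (by linarith [ht_nonneg n, ht_nonneg (n + 1)]),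
      show (1 / 4 : ℝ≥0∞) = 2⁻¹ * 2⁻¹ by rw [← ENNReal.mul_inv (by simp) (by simp)]; norm_num,
      mul_mul_mul_comm]
    exact mul_le_mul' (inv_two_mul_sum_le_setLIntegral_Ico_zero_midpoint ht hμ_step n)
      (inv_two_mul_tsum_le_setLIntegral_iUnion_Ioo_midpoint ht hμinv_step
        (by linarith [hlen n, hℓ n]))

/-- Two-sided comparison between the Kac–Krein function
`Φ(x) = ∫₀ˣ μ · ∫ₓᴸ 1/μ` and the discrete quantity
`(Σ_{k ≤ n} sₖ sₖ₊₁ ℓₖ)(Σ_{k ≥ n} ℓₖ/(sₖ sₖ₊₁))`, in `[0,∞]`. -/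
theorem kacKrein_function_estimates (s : ℕ → ℕ) (hs : ∀ n, 1 ≤ s n)
    (ℓ : ℕ → ℝ) (hℓ : ∀ n, 0 < ℓ n)
    (t : ℕ → ℝ) (ht0 : t 0 = 0) (htrec : ∀ n, t (n + 1) = t n + ℓ n)
    (L : ℝ≥0∞) (hL : L = ∑' n, ENNReal.ofReal (ℓ n))
    (μ : ℝ → ℝ)
    (hμ : ∀ n : ℕ, ∀ x ∈ Set.Ico (t n) (t (n + 1)), μ x = (s n : ℝ) * (s (n + 1) : ℝ))
    (hμout : ∀ x : ℝ, (x < 0 ∨ L ≤ ENNReal.ofReal x) → μ x = 1) :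
    (∀ n : ℕ, ∀ x ∈ Set.Ico (t n) (t (n + 1)),
      (∫⁻ y in Set.Ioo 0 x, ENNReal.ofReal (μ y)) *
        (∫⁻ y in {y : ℝ | x < y ∧ ENNReal.ofReal y < L}, ENNReal.ofReal ((μ y)⁻¹)) ≤
      (∑ k ∈ Finset.range (n + 1), ENNReal.ofReal ((s k : ℝ) * (s (k + 1) : ℝ) * ℓ k)) *
        (∑' k : ℕ, ENNReal.ofReal (ℓ (n + k) / ((s (n + k) : ℝ) * (s (n + k + 1) : ℝ))))) ∧
    (∀ n : ℕ,
      (1 / 4 : ℝ≥0∞) *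
        ((∑ k ∈ Finset.range (n + 1), ENNReal.ofReal ((s k : ℝ) * (s (k + 1) : ℝ) * ℓ k)) *
          (∑' k : ℕ, ENNReal.ofReal (ℓ (n + k) / ((s (n + k) : ℝ) * (s (n + k + 1) : ℝ))))) ≤
      (∫⁻ y in Set.Ioo 0 ((t n + t (n + 1)) / 2), ENNReal.ofReal (μ y)) *
        (∫⁻ y in {y : ℝ | (t n + t (n + 1)) / 2 < y ∧ ENNReal.ofReal y < L},
          ENNReal.ofReal ((μ y)⁻¹))) :=
  kacKrein_function_estimates_general s ℓ hℓ t ht0 htrec L hL μ hμ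
end

section
/- The following two-sided bound holds, with all suprema taken in [0,∞]: sup_{n ∈ ℕ} (Σ_{k=0}^n s_k s_{k+1} ℓ_k)·(Σ_{k=n+1}^∞ ℓ_k/(s_k s_{k+1})) ≤ sup_{x ∈ (0,L)} (∫_{(0,x)} μ(s) ds)·(∫_{(x,L)} μ(s)⁻¹ ds) ≤ sup_{n ∈ ℕ} (Σ_{k=0}^n s_k s_{k+1} ℓ_k)·(Σ_{k=n}^∞ ℓ_k/(s_k s_{k+1})). -/
/-!
At a breakpoint `x = t (n + 1)` the two integrals are exactly the discrete sums
`∑_{k ≤ n} s_k s_{k+1} ℓ_k` and `∑_{k > n} ℓ_k / (s_k s_{k+1})`, which gives the lower bound.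
For `x ∈ [t n, t (n + 1))`, enlarging `(0, x)` to `(0, t (n + 1))` and `(x, L)` to `(t n, L)`
only increases both integrals, and turns them into the sums with index ranges `k ≤ n` and
`k ≥ n`, which gives the upper bound.
-/

open MeasureTheory
open scoped ENNReal

section StepFunction

variable {ℓ t : ℕ → ℝ}

lemma monotone_of_eq_add (hℓ : ∀ n, 0 ≤ ℓ n) (htrec : ∀ n, t (n + 1) = t n + ℓ n) :
    Monotone t :=
  monotone_nat_of_le_succ fun n => by linarith [htrec n, hℓ n]

lemma strictMono_of_eq_add (hℓ : ∀ n, 0 < ℓ n) (htrec : ∀ n, t (n + 1) = t n + ℓ n) :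
    StrictMono t :=
  strictMono_nat_of_lt_succ fun n => by linarith [htrec n, hℓ n]

lemma tsum_ofReal_eq_iSup_of_eq_add (hℓ : ∀ n, 0 ≤ ℓ n) (ht0 : t 0 = 0)
    (htrec : ∀ n, t (n + 1) = t n + ℓ n) :
    ∑' n, ENNReal.ofReal (ℓ n) = ⨆ N, ENNReal.ofReal (t N) := by
  rw [ENNReal.tsum_eq_iSup_nat]
  refine iSup_congr fun N => ?_
  rw [← ENNReal.ofReal_sum_of_nonneg fun k _ => hℓ k,
    Finset.sum_range_induction ℓ t ht0 N fun k _ => htrec k]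

lemma ofReal_lt_iSup_ofReal_iff {y : ℝ} (hy : 0 ≤ y) :
    ENNReal.ofReal y < ⨆ N, ENNReal.ofReal (t N) ↔ ∃ N, y < t N := by
  simp only [lt_iSup_iff, ENNReal.ofReal_lt_ofReal_iff']
  exact exists_congr fun N => ⟨And.left, fun h => ⟨h, hy.trans_lt h⟩⟩

lemma exists_mem_Ico_of_lt {y : ℝ} (hy : t 0 ≤ y) {N : ℕ} (hN : y < t N) :
    ∃ n, y ∈ Set.Ico (t n) (t (n + 1)) := by
  induction N with
  | zero => exact absurd hN hy.not_gt
  | succ N ih =>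
    by_cases h : y < t N
    · exact ih h
    · exact ⟨N, not_lt.1 h, hN⟩

lemma setOf_lt_and_ofReal_lt_iSup_eq_iUnion (ht : Monotone t) (m : ℕ) (hm : 0 ≤ t m) :
    {y : ℝ | t m < y ∧ ENNReal.ofReal y < ⨆ N, ENNReal.ofReal (t N)} =
      ⋃ N, Set.Ioo (t m) (t (m + N)) := by
  ext y
  simp only [Set.mem_ofPred_eq, Set.mem_iUnion, Set.mem_Ioo]
  constructor
  · rintro ⟨hmy, hyL⟩
    obtain ⟨N, hN⟩ := (ofReal_lt_iSup_ofReal_iff (hm.trans hmy.le)).1 hyL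
    exact ⟨N, hmy, hN.trans_le (ht (Nat.le_add_left N m))⟩
  · rintro ⟨N, hmy, hyN⟩
    exact ⟨hmy, (ofReal_lt_iSup_ofReal_iff (hm.trans hmy.le)).2 ⟨m + N, hyN⟩⟩

variable {f : ℝ → ℝ} {c : ℕ → ℝ}

lemma setLIntegral_Ico_of_eq_on_Ico (hℓ : ∀ n, 0 ≤ ℓ n) (htrec : ∀ n, t (n + 1) = t n + ℓ n)
    (hf : ∀ n, ∀ x ∈ Set.Ico (t n) (t (n + 1)), f x = c n) (n : ℕ) :
    ∫⁻ y in Set.Ico (t n) (t (n + 1)), ENNReal.ofReal (f y) = ENNReal.ofReal (c n * ℓ n) := by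
  rw [setLIntegral_congr_fun measurableSet_Ico fun y hy => by rw [hf n y hy],
    setLIntegral_const, Real.volume_Ico, htrec, add_sub_cancel_left,
    ENNReal.ofReal_mul' (hℓ n)]

lemma setLIntegral_Ioo_of_eq_on_Ico (hℓ : ∀ n, 0 ≤ ℓ n) (htrec : ∀ n, t (n + 1) = t n + ℓ n)
    (hf : ∀ n, ∀ x ∈ Set.Ico (t n) (t (n + 1)), f x = c n) {a b : ℕ} (hab : a ≤ b) :
    ∫⁻ y in Set.Ioo (t a) (t b), ENNReal.ofReal (f y) =
      ∑ k ∈ Finset.Ico a b, ENNReal.ofReal (c k * ℓ k) := by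
  rw [setLIntegral_congr Ioo_ae_eq_Ico]
  induction b, hab using Nat.le_induction with
  | base => simp
  | succ b hab ih =>
    have ht := monotone_of_eq_add hℓ htrec
    rw [← Set.Ico_union_Ico_eq_Ico (ht hab) (ht b.le_succ),
      lintegral_union measurableSet_Ico (Set.Ico_disjoint_Ico_same), ih,
      setLIntegral_Ico_of_eq_on_Ico hℓ htrec hf, Finset.sum_Ico_succ_top hab]

lemma setLIntegral_tail_of_eq_on_Ico (hℓ : ∀ n, 0 ≤ ℓ n) (ht0 : t 0 = 0)
    (htrec : ∀ n, t (n + 1) = t n + ℓ n)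
    (hf : ∀ n, ∀ x ∈ Set.Ico (t n) (t (n + 1)), f x = c n) (m : ℕ) :
    ∫⁻ y in {y : ℝ | t m < y ∧ ENNReal.ofReal y < ⨆ N, ENNReal.ofReal (t N)},
        ENNReal.ofReal (f y) =
      ∑' k, ENNReal.ofReal (c (m + k) * ℓ (m + k)) := by
  have ht := monotone_of_eq_add hℓ htrec
  rw [setOf_lt_and_ofReal_lt_iSup_eq_iUnion ht m (ht0 ▸ ht m.zero_le),
    setLIntegral_iUnion_of_directed _ (fun N N' => ⟨max N N', Set.Ioo_subset_Ioo_right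
      (ht (by omega)), Set.Ioo_subset_Ioo_right (ht (by omega))⟩),
    ENNReal.tsum_eq_iSup_nat]
  refine iSup_congr fun N => ?_
  rw [setLIntegral_Ioo_of_eq_on_Ico hℓ htrec hf (Nat.le_add_right m N),
    Finset.sum_Ico_eq_sum_range, Nat.add_sub_cancel_left]

end StepFunction

theorem spectral_gap_constant_estimate_general (s : ℕ → ℕ)
    (ℓ : ℕ → ℝ) (hℓ : ∀ n, 0 < ℓ n)
    (t : ℕ → ℝ) (ht0 : t 0 = 0) (htrec : ∀ n, t (n + 1) = t n + ℓ n)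
    (L : ℝ≥0∞) (hL : L = ∑' n, ENNReal.ofReal (ℓ n))
    (μ : ℝ → ℝ)
    (hμ : ∀ n : ℕ, ∀ x ∈ Set.Ico (t n) (t (n + 1)), μ x = (s n : ℝ) * (s (n + 1) : ℝ)) :
    (⨆ n : ℕ,
      (∑ k ∈ Finset.range (n + 1), ENNReal.ofReal ((s k : ℝ) * (s (k + 1) : ℝ) * ℓ k)) *
        (∑' k : ℕ,
          ENNReal.ofReal (ℓ (n + 1 + k) / ((s (n + 1 + k) : ℝ) * (s (n + 1 + k + 1) : ℝ))))) ≤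
      (⨆ x ∈ {x : ℝ | 0 < x ∧ ENNReal.ofReal x < L},
        (∫⁻ y in Set.Ioo 0 x, ENNReal.ofReal (μ y)) *
          (∫⁻ y in {y : ℝ | x < y ∧ ENNReal.ofReal y < L}, ENNReal.ofReal ((μ y)⁻¹))) ∧
    (⨆ x ∈ {x : ℝ | 0 < x ∧ ENNReal.ofReal x < L},
        (∫⁻ y in Set.Ioo 0 x, ENNReal.ofReal (μ y)) *
          (∫⁻ y in {y : ℝ | x < y ∧ ENNReal.ofReal y < L}, ENNReal.ofReal ((μ y)⁻¹))) ≤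
      ⨆ n : ℕ,
        (∑ k ∈ Finset.range (n + 1), ENNReal.ofReal ((s k : ℝ) * (s (k + 1) : ℝ) * ℓ k)) *
          (∑' k : ℕ, ENNReal.ofReal (ℓ (n + k) / ((s (n + k) : ℝ) * (s (n + k + 1) : ℝ)))) := by
  have hℓ' n := (hℓ n).le
  rw [tsum_ofReal_eq_iSup_of_eq_add hℓ' ht0 htrec] at hL
  subst hL
  have hleft (m : ℕ) : ∫⁻ y in Set.Ioo 0 (t m), ENNReal.ofReal (μ y) =
      ∑ k ∈ Finset.range m, ENNReal.ofReal ((s k : ℝ) * (s (k + 1) : ℝ) * ℓ k) := by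
    rw [← ht0, setLIntegral_Ioo_of_eq_on_Ico hℓ' htrec hμ m.zero_le, Finset.range_eq_Ico]
  have hright (m : ℕ) :
      ∫⁻ y in {y : ℝ | t m < y ∧ ENNReal.ofReal y < ⨆ N, ENNReal.ofReal (t N)},
          ENNReal.ofReal ((μ y)⁻¹) =
        ∑' k, ENNReal.ofReal (ℓ (m + k) / ((s (m + k) : ℝ) * (s (m + k + 1) : ℝ))) := by
    have hμinv : ∀ n, ∀ x ∈ Set.Ico (t n) (t (n + 1)), (μ x)⁻¹ = ((s n : ℝ) * s (n + 1))⁻¹ :=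
      fun n x hx => by rw [hμ n x hx]
    simp_rw [setLIntegral_tail_of_eq_on_Ico hℓ' ht0 htrec hμinv m, inv_mul_eq_div]
  constructor
  · have ht := strictMono_of_eq_add hℓ htrec
    refine iSup_le fun n => le_iSup₂_of_le (t (n + 1)) ?_ (by rw [hleft, hright])
    have htpos : 0 < t (n + 1) := ht0 ▸ ht n.succ_pos
    exact ⟨htpos, (ofReal_lt_iSup_ofReal_iff htpos.le).2 ⟨n + 2, ht (by omega)⟩⟩
  · refine iSup₂_le fun x ⟨hx0, hxL⟩ => ?_
    obtain ⟨N, hxN⟩ := (ofReal_lt_iSup_ofReal_iff hx0.le).1 hxL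
    obtain ⟨n, htnx, hxtn⟩ := exists_mem_Ico_of_lt (ht0 ▸ hx0.le) hxN
    refine le_iSup_of_le n ?_
    rw [← hleft, ← hright]
    exact mul_le_mul' (lintegral_mono_set (Set.Ioo_subset_Ioo_right hxtn.le))
      (lintegral_mono_set fun y hy => ⟨htnx.trans_lt hy.1, hy.2⟩)

/-- display (6.7), Remark 6.2.  Two-sided bound for
`C(L) = sup_{x ∈ (0,L)} ∫₀ˣ μ · ∫ₓᴸ 1/μ` in terms of the discrete quantities. -/
theorem spectral_gap_constant_estimate (s : ℕ → ℕ) (hs : ∀ n, 1 ≤ s n)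
    (ℓ : ℕ → ℝ) (hℓ : ∀ n, 0 < ℓ n)
    (t : ℕ → ℝ) (ht0 : t 0 = 0) (htrec : ∀ n, t (n + 1) = t n + ℓ n)
    (L : ℝ≥0∞) (hL : L = ∑' n, ENNReal.ofReal (ℓ n))
    (μ : ℝ → ℝ)
    (hμ : ∀ n : ℕ, ∀ x ∈ Set.Ico (t n) (t (n + 1)), μ x = (s n : ℝ) * (s (n + 1) : ℝ))
    (hμout : ∀ x : ℝ, (x < 0 ∨ L ≤ ENNReal.ofReal x) → μ x = 1) :
    (⨆ n : ℕ,
      (∑ k ∈ Finset.range (n + 1), ENNReal.ofReal ((s k : ℝ) * (s (k + 1) : ℝ) * ℓ k)) *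
        (∑' k : ℕ,
          ENNReal.ofReal (ℓ (n + 1 + k) / ((s (n + 1 + k) : ℝ) * (s (n + 1 + k + 1) : ℝ))))) ≤
      (⨆ x ∈ {x : ℝ | 0 < x ∧ ENNReal.ofReal x < L},
        (∫⁻ y in Set.Ioo 0 x, ENNReal.ofReal (μ y)) *
          (∫⁻ y in {y : ℝ | x < y ∧ ENNReal.ofReal y < L}, ENNReal.ofReal ((μ y)⁻¹))) ∧
    (⨆ x ∈ {x : ℝ | 0 < x ∧ ENNReal.ofReal x < L},
        (∫⁻ y in Set.Ioo 0 x, ENNReal.ofReal (μ y)) *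
          (∫⁻ y in {y : ℝ | x < y ∧ ENNReal.ofReal y < L}, ENNReal.ofReal ((μ y)⁻¹))) ≤
      ⨆ n : ℕ,
        (∑ k ∈ Finset.range (n + 1), ENNReal.ofReal ((s k : ℝ) * (s (k + 1) : ℝ) * ℓ k)) *
          (∑' k : ℕ, ENNReal.ofReal (ℓ (n + k) / ((s (n + k) : ℝ) * (s (n + k + 1) : ℝ)))) :=
  spectral_gap_constant_estimate_general s ℓ hℓ t ht0 htrec L hL μ hμ
end

section
/- The function x ↦ (∫_{(0,x)} μ(s) ds)·(∫_{(x,L)} μ(s)⁻¹ ds), with values in [0,∞], tends to 0 as x → L from the left (as x → +∞ when L = ∞) if and only if lim_{n→∞} (Σ_{k=0}^n s_k s_{k+1} ℓ_k)·(Σ_{k=n}^∞ ℓ_k/(s_k s_{k+1})) = 0 in [0,∞]. -/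
open MeasureTheory Filter Topology
open scoped ENNReal Classical

/-!
Write the Kac–Krein function as `A x * B x`, where `A x = ∫₀ˣ μ` is nondecreasing and
`B x = ∫ₓᴸ 1/μ` is nonincreasing. On a cell `[tₙ, tₙ₊₁]` it is therefore dominated by
`A tₙ₊₁ * B tₙ`, which is exactly the `n`-th term of the discrete sequence. Conversely, `μ` is
constant on the cell, so both halves of the cell contribute equally to `A` and to `B`; hence
`A tₙ₊₁ ≤ 2 A mₙ` and `B tₙ ≤ 2 B mₙ` at the midpoint `mₙ`, and the `n`-th term is at most four
times the Kac–Krein function at `mₙ`, while `mₙ → L⁻`.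
-/

open Set ENNReal

noncomputable def approachBelow (L : ℝ≥0∞) : Filter ℝ :=
  if L = ∞ then atTop else 𝓝[<] L.toReal

lemma tendsto_approachBelow {L : ℝ≥0∞} {u : ℕ → ℝ} (hu0 : ∀ n, 0 ≤ u n)
    (huL : ∀ n, ENNReal.ofReal (u n) < L)
    (hu : Tendsto (fun n => ENNReal.ofReal (u n)) atTop (𝓝 L)) :
    Tendsto u atTop (approachBelow L) := by
  unfold approachBelow
  split_ifs with hL
  · subst hL
    refine tendsto_atTop.2 fun b => ?_
    filter_upwards [hu.eventually (lt_mem_nhds (ofReal_lt_top (r := b)))] with n hn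
    exact ((ofReal_lt_ofReal_iff').1 hn).1.le
  · have hlim : Tendsto u atTop (𝓝 L.toReal) :=
      ((ENNReal.tendsto_toReal hL).comp hu).congr fun n => toReal_ofReal (hu0 n)
    exact tendsto_nhdsWithin_of_tendsto_nhds_of_eventually_within _ hlim
      (Eventually.of_forall fun n => (ofReal_lt_iff_lt_toReal (hu0 n) hL).1 (huL n))

lemma eventually_approachBelow {L : ℝ≥0∞} {a : ℝ} (ha : 0 ≤ a) (haL : ENNReal.ofReal a < L) :
    ∀ᶠ x in approachBelow L, a ≤ x ∧ ENNReal.ofReal x < L := by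
  unfold approachBelow
  split_ifs with hL
  · filter_upwards [eventually_ge_atTop a] with x hx
    exact ⟨hx, hL ▸ ofReal_lt_top⟩
  · have haL' : a < L.toReal := (ofReal_lt_iff_lt_toReal ha hL).1 haL
    filter_upwards [Ioo_mem_nhdsLT haL'] with x hx
    exact ⟨hx.1.le, (ofReal_lt_iff_lt_toReal (ha.trans hx.1.le) hL).2 hx.2⟩

theorem tendsto_mul_nhds_zero_iff_of_cells {F : Filter ℝ} {A B : ℝ → ℝ≥0∞}
    (hA : Monotone A) (hB : Antitone B) {t m : ℕ → ℝ}
    (hcover : ∀ N, ∀ᶠ x in F, ∃ n ≥ N, x ∈ Icc (t n) (t (n + 1)))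
    (hm : Tendsto m atTop F) {C : ℝ≥0∞} (hC : C ≠ ∞)
    (hAm : ∀ n, A (t (n + 1)) ≤ C * A (m n)) (hBm : ∀ n, B (t n) ≤ C * B (m n)) :
    Tendsto (fun x => A x * B x) F (𝓝 0) ↔
      Tendsto (fun n => A (t (n + 1)) * B (t n)) atTop (𝓝 0) := by
  constructor
  · intro h
    have hCm : Tendsto (fun n => C * C * (A (m n) * B (m n))) atTop (𝓝 0) := by
      simpa using ENNReal.Tendsto.const_mul (h.comp hm) (Or.inr (mul_ne_top hC hC))
    refine tendsto_of_tendsto_of_tendsto_of_le_of_le tendsto_const_nhds hCm (fun _ => zero_le)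
      fun n => ?_
    calc A (t (n + 1)) * B (t n) ≤ C * A (m n) * (C * B (m n)) := mul_le_mul' (hAm n) (hBm n)
      _ = C * C * (A (m n) * B (m n)) := by ring
  · intro h
    refine ENNReal.tendsto_nhds_zero.2 fun ε hε => ?_
    obtain ⟨N, hN⟩ := eventually_atTop.1 (ENNReal.tendsto_nhds_zero.1 h ε hε)
    filter_upwards [hcover N] with x ⟨n, hn, hxn⟩
    exact (mul_le_mul' (hA hxn.2) (hB hxn.1)).trans (hN n hn)

lemma setLIntegral_eq_mul_of_eqOn {α : Type*} [MeasurableSpace α] {μ : Measure α} {s : Set α}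
    (hs : MeasurableSet s) {f : α → ℝ≥0∞} {c : ℝ≥0∞} (hf : EqOn f (fun _ => c) s) :
    ∫⁻ x in s, f x ∂μ = c * μ s := by
  rw [setLIntegral_congr_fun hs hf, setLIntegral_const]

lemma setLIntegral_Ioo_zero_le_two_mul_midpoint {f : ℝ → ℝ≥0∞} {c : ℝ≥0∞} {p q : ℝ}
    (hp : 0 ≤ p) (hpq : p ≤ q) (hf : EqOn f (fun _ => c) (Ico p q)) :
    ∫⁻ y in Ioo 0 q, f y ≤ 2 * ∫⁻ y in Ioo 0 ((p + q) / 2), f y := by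
  set m := (p + q) / 2 with hm
  obtain ⟨hpm, hmq⟩ : p ≤ m ∧ m ≤ q := ⟨by linarith, by linarith⟩
  have hupper : ∫⁻ y in Ico m q, f y = ∫⁻ y in Ioo p m, f y := by
    rw [setLIntegral_eq_mul_of_eqOn measurableSet_Ico (hf.mono (Ico_subset_Ico_left hpm)),
      setLIntegral_eq_mul_of_eqOn measurableSet_Ioo
        (hf.mono (Ioo_subset_Ico_self.trans (Ico_subset_Ico_right hmq))),
      Real.volume_Ico, Real.volume_Ioo, show q - m = m - p by linarith]
  calc ∫⁻ y in Ioo 0 q, f y ≤ ∫⁻ y in Ioo 0 m ∪ Ico m q, f y :=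
        lintegral_mono_set Ioo_subset_Ioo_union_Ico
    _ ≤ (∫⁻ y in Ioo 0 m, f y) + ∫⁻ y in Ico m q, f y := lintegral_union_le _ _ _
    _ ≤ (∫⁻ y in Ioo 0 m, f y) + ∫⁻ y in Ioo 0 m, f y := by
      rw [hupper]
      gcongr
    _ = 2 * ∫⁻ y in Ioo 0 m, f y := (two_mul _).symm

lemma setLIntegral_tail_le_two_mul_midpoint {f : ℝ → ℝ≥0∞} {c : ℝ≥0∞} {L : ℝ≥0∞} {p q : ℝ}
    (hp : 0 ≤ p) (hpq : p < q) (hqL : ENNReal.ofReal q ≤ L) (hf : EqOn f (fun _ => c) (Ico p q)) :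
    ∫⁻ y in {y : ℝ | p < y ∧ ENNReal.ofReal y < L}, f y ≤
      2 * ∫⁻ y in {y : ℝ | (p + q) / 2 < y ∧ ENNReal.ofReal y < L}, f y := by
  set m := (p + q) / 2 with hm
  set T := {y : ℝ | m < y ∧ ENNReal.ofReal y < L}
  obtain ⟨hpm, hmq⟩ : p ≤ m ∧ m < q := ⟨by linarith, by linarith⟩
  have hlower : ∫⁻ y in Ioc p m, f y = ∫⁻ y in Ioo m q, f y := by
    have hcell : Ioc p m ⊆ Ico p q := fun y hy => ⟨hy.1.le, hy.2.trans_lt hmq⟩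
    rw [setLIntegral_eq_mul_of_eqOn measurableSet_Ioc (hf.mono hcell),
      setLIntegral_eq_mul_of_eqOn measurableSet_Ioo
        (hf.mono (Ioo_subset_Ico_self.trans (Ico_subset_Ico_left hpm))),
      Real.volume_Ioc, Real.volume_Ioo, show q - m = m - p by linarith]
  have hsplit : {y : ℝ | p < y ∧ ENNReal.ofReal y < L} ⊆ Ioc p m ∪ T := fun y ⟨hpy, hyL⟩ =>
    (le_or_gt y m).imp (fun hym => ⟨hpy, hym⟩) fun hmy => ⟨hmy, hyL⟩
  have hcell : Ioo m q ⊆ T := fun y ⟨hmy, hyq⟩ =>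
    ⟨hmy, ((ofReal_lt_ofReal_iff (by linarith)).2 hyq).trans_le hqL⟩
  calc ∫⁻ y in {y : ℝ | p < y ∧ ENNReal.ofReal y < L}, f y
      ≤ ∫⁻ y in Ioc p m ∪ T, f y := lintegral_mono_set hsplit
    _ ≤ (∫⁻ y in Ioc p m, f y) + ∫⁻ y in T, f y := lintegral_union_le _ _ _
    _ ≤ (∫⁻ y in T, f y) + ∫⁻ y in T, f y := by
      rw [hlower]
      gcongr
    _ = 2 * ∫⁻ y in T, f y := (two_mul _).symm

theorem Monotone.mem_iUnion_Ico_succ_iff {α : Type*} [LinearOrder α] {u : ℕ → α}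
    (hu : Monotone u) {y : α} :
    y ∈ ⋃ k, Ico (u k) (u (k + 1)) ↔ u 0 ≤ y ∧ ∃ m, y < u m := by
  constructor
  · rintro ⟨-, ⟨k, rfl⟩, hk⟩
    exact ⟨(hu (Nat.zero_le k)).trans hk.1, k + 1, hk.2⟩
  · rintro ⟨h0, m, hm⟩
    induction m with
    | zero => exact absurd h0 (not_le.2 hm)
    | succ m ih =>
      by_cases hym : y < u m
      · exact ih hym
      · exact mem_iUnion.2 ⟨m, not_lt.1 hym, hm⟩

lemma tendsto_ofReal_tsum_of_partialSums {t ℓ : ℕ → ℝ} (hℓ : ∀ n, 0 ≤ ℓ n) (ht0 : t 0 = 0)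
    (htrec : ∀ n, t (n + 1) = t n + ℓ n) :
    Tendsto (fun n => ENNReal.ofReal (t n)) atTop (𝓝 (∑' n, ENNReal.ofReal (ℓ n))) := by
  have hsum : ∀ n, t n = ∑ k ∈ Finset.range n, ℓ k := by
    intro n
    induction n with
    | zero => simp [ht0]
    | succ n ih => rw [htrec, ih, Finset.sum_range_succ]
  have hsum' : ∀ n, ENNReal.ofReal (t n) = ∑ k ∈ Finset.range n, ENNReal.ofReal (ℓ k) :=
    fun n => by rw [hsum, ENNReal.ofReal_sum_of_nonneg fun k _ => hℓ k]
  simpa only [hsum'] using ENNReal.tendsto_nat_tsum fun k => ENNReal.ofReal (ℓ k)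

section Partition

variable {t : ℕ → ℝ} {L : ℝ≥0∞} {f : ℝ → ℝ≥0∞} {a : ℕ → ℝ≥0∞}

lemma ofReal_lt_of_strictMono_of_tendsto (ht : StrictMono t) (ht0 : 0 ≤ t 0)
    (htL : Tendsto (fun n => ENNReal.ofReal (t n)) atTop (𝓝 L)) (n : ℕ) :
    ENNReal.ofReal (t n) < L :=
  calc ENNReal.ofReal (t n) < ENNReal.ofReal (t (n + 1)) :=
        (ofReal_lt_ofReal_iff (ht0.trans_lt (ht (Nat.succ_pos n)))).2 (ht n.lt_succ_self)
    _ ≤ L := (ofReal_mono.comp ht.monotone).ge_of_tendsto htL _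

lemma ofReal_lt_iff_exists_lt (ht : StrictMono t) (ht0 : 0 ≤ t 0)
    (htL : Tendsto (fun n => ENNReal.ofReal (t n)) atTop (𝓝 L)) {y : ℝ} (hy : 0 ≤ y) :
    ENNReal.ofReal y < L ↔ ∃ m, y < t m := by
  constructor
  · intro hyL
    obtain ⟨m, hm⟩ := (htL.eventually (lt_mem_nhds hyL)).exists
    exact ⟨m, ((ofReal_lt_ofReal_iff').1 hm).1⟩
  · rintro ⟨m, hm⟩
    exact ((ofReal_lt_ofReal_iff (hy.trans_lt hm)).2 hm).trans
      (ofReal_lt_of_strictMono_of_tendsto ht ht0 htL m)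

lemma setOf_le_and_ofReal_lt_eq_iUnion (ht : StrictMono t) (ht0 : 0 ≤ t 0)
    (htL : Tendsto (fun n => ENNReal.ofReal (t n)) atTop (𝓝 L)) (n : ℕ) :
    {y : ℝ | t n ≤ y ∧ ENNReal.ofReal y < L} = ⋃ k, Ico (t (n + k)) (t (n + k + 1)) := by
  ext y
  have htail : Monotone fun k => t (n + k) := fun _ _ h => ht.monotone (Nat.add_le_add_left h n)
  refine Iff.trans ?_ htail.mem_iUnion_Ico_succ_iff.symm
  rw [add_zero]
  refine and_congr_right fun hny => ?_
  rw [ofReal_lt_iff_exists_lt ht ht0 htL ((ht0.trans (ht.monotone n.zero_le)).trans hny)]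
  exact ⟨fun ⟨m, hm⟩ => ⟨m, hm.trans_le (ht.monotone (Nat.le_add_left m n))⟩,
    fun ⟨m, hm⟩ => ⟨n + m, hm⟩⟩

lemma setLIntegral_Ioo_zero_eq_sum (ht : Monotone t) (ht0 : t 0 = 0)
    (hf : ∀ k, EqOn f (fun _ => a k) (Ico (t k) (t (k + 1)))) (n : ℕ) :
    ∫⁻ y in Ioo 0 (t n), f y = ∑ k ∈ Finset.range n, a k * ENNReal.ofReal (t (k + 1) - t k) := by
  rw [setLIntegral_congr Ioo_ae_eq_Ico, ← ht0]
  induction n with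
  | zero => simp
  | succ n ih =>
    rw [← Ico_union_Ico_eq_Ico (ht n.zero_le) (ht n.le_succ),
      lintegral_union measurableSet_Ico (Ico_disjoint_Ico_same), ih, Finset.sum_range_succ,
      setLIntegral_eq_mul_of_eqOn measurableSet_Ico (hf n), Real.volume_Ico]

lemma setLIntegral_tail_eq_tsum (ht : StrictMono t) (ht0 : 0 ≤ t 0)
    (htL : Tendsto (fun n => ENNReal.ofReal (t n)) atTop (𝓝 L))
    (hf : ∀ k, EqOn f (fun _ => a k) (Ico (t k) (t (k + 1)))) (n : ℕ) :
    ∫⁻ y in {y : ℝ | t n < y ∧ ENNReal.ofReal y < L}, f y =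
      ∑' k, a (n + k) * ENNReal.ofReal (t (n + k + 1) - t (n + k)) := by
  have hae : {y : ℝ | t n < y ∧ ENNReal.ofReal y < L} =ᵐ[volume]
      {y : ℝ | t n ≤ y ∧ ENNReal.ofReal y < L} :=
    (Ioi_ae_eq_Ici (a := t n)).inter (EventuallyEq.refl _ {y : ℝ | ENNReal.ofReal y < L})
  have htail : Monotone fun k => t (n + k) := fun _ _ h => ht.monotone (Nat.add_le_add_left h n)
  rw [setLIntegral_congr hae, setOf_le_and_ofReal_lt_eq_iUnion ht ht0 htL,
    lintegral_iUnion (fun _ => measurableSet_Ico)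
      (by exact htail.pairwise_disjoint_on_Ico_succ)]
  refine tsum_congr fun k => ?_
  rw [setLIntegral_eq_mul_of_eqOn measurableSet_Ico (hf (n + k)), Real.volume_Ico]

lemma eventually_exists_mem_Icc_approachBelow (ht : StrictMono t) (ht0 : 0 ≤ t 0)
    (htL : Tendsto (fun n => ENNReal.ofReal (t n)) atTop (𝓝 L)) (N : ℕ) :
    ∀ᶠ x in approachBelow L, ∃ n ≥ N, x ∈ Icc (t n) (t (n + 1)) := by
  filter_upwards [eventually_approachBelow (ht0.trans (ht.monotone N.zero_le))
    (ofReal_lt_of_strictMono_of_tendsto ht ht0 htL N)] with x hx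
  have hx' : x ∈ {y | t N ≤ y ∧ ENNReal.ofReal y < L} := hx
  rw [setOf_le_and_ofReal_lt_eq_iUnion ht ht0 htL, mem_iUnion] at hx'
  obtain ⟨k, hk⟩ := hx'
  exact ⟨N + k, N.le_add_right k, Ico_subset_Icc_self hk⟩

lemma tendsto_midpoint_approachBelow (ht : StrictMono t) (ht0 : 0 ≤ t 0)
    (htL : Tendsto (fun n => ENNReal.ofReal (t n)) atTop (𝓝 L)) :
    Tendsto (fun n => (t n + t (n + 1)) / 2) atTop (approachBelow L) := by
  have hlow : ∀ n, t n ≤ (t n + t (n + 1)) / 2 := fun n => by linarith [ht n.lt_succ_self]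
  have hup : ∀ n, (t n + t (n + 1)) / 2 ≤ t (n + 1) := fun n => by linarith [ht n.lt_succ_self]
  refine tendsto_approachBelow (fun n => (ht0.trans (ht.monotone n.zero_le)).trans (hlow n))
    (fun n => (ofReal_le_ofReal (hup n)).trans_lt
      (ofReal_lt_of_strictMono_of_tendsto ht ht0 htL _))
    (tendsto_of_tendsto_of_tendsto_of_le_of_le htL (htL.comp (tendsto_add_atTop_nat 1))
      (fun n => ofReal_le_ofReal (hlow n)) (fun n => ofReal_le_ofReal (hup n)))

end Partition

theorem kacKrein_tendsto_zero_iff_general (s : ℕ → ℕ)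
    (ℓ : ℕ → ℝ) (hℓ : ∀ n, 0 < ℓ n)
    (t : ℕ → ℝ) (ht0 : t 0 = 0) (htrec : ∀ n, t (n + 1) = t n + ℓ n)
    (L : ℝ≥0∞) (hL : L = ∑' n, ENNReal.ofReal (ℓ n))
    (μ : ℝ → ℝ)
    (hμ : ∀ n : ℕ, ∀ x ∈ Set.Ico (t n) (t (n + 1)), μ x = (s n : ℝ) * (s (n + 1) : ℝ)) :
    Tendsto
      (fun x : ℝ =>
        (∫⁻ y in Set.Ioo 0 x, ENNReal.ofReal (μ y)) *
          (∫⁻ y in {y : ℝ | x < y ∧ ENNReal.ofReal y < L}, ENNReal.ofReal ((μ y)⁻¹)))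
      (if L = ∞ then atTop else 𝓝[<] L.toReal) (𝓝 0) ↔
    Tendsto
      (fun n : ℕ =>
        (∑ k ∈ Finset.range (n + 1), ENNReal.ofReal ((s k : ℝ) * (s (k + 1) : ℝ) * ℓ k)) *
          (∑' k : ℕ, ENNReal.ofReal (ℓ (n + k) / ((s (n + k) : ℝ) * (s (n + k + 1) : ℝ)))))
      atTop (𝓝 0) := by
  have ht : StrictMono t := strictMono_nat_of_lt_succ fun n => by linarith [htrec n, hℓ n]
  have hℓt : ∀ n, t (n + 1) - t n = ℓ n := fun n => by rw [htrec]; ring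
  have htL : Tendsto (fun n => ENNReal.ofReal (t n)) atTop (𝓝 L) :=
    hL ▸ tendsto_ofReal_tsum_of_partialSums (fun n => (hℓ n).le) ht0 htrec
  have hcell : ∀ (φ : ℝ → ℝ≥0∞) n, EqOn (fun y => φ (μ y))
      (fun _ => φ ((s n : ℝ) * s (n + 1))) (Ico (t n) (t (n + 1))) :=
    fun φ n y hy => by simp only [hμ n y hy]
  have hA : ∀ n, ∫⁻ y in Ioo 0 (t n), ENNReal.ofReal (μ y) =
      ∑ k ∈ Finset.range n, ENNReal.ofReal ((s k : ℝ) * s (k + 1) * ℓ k) := fun n => by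
    rw [setLIntegral_Ioo_zero_eq_sum ht.monotone ht0 (hcell ENNReal.ofReal)]
    exact Finset.sum_congr rfl fun k _ => by rw [hℓt, ← ENNReal.ofReal_mul (by positivity)]
  have hB : ∀ n, ∫⁻ y in {y : ℝ | t n < y ∧ ENNReal.ofReal y < L}, ENNReal.ofReal (μ y)⁻¹ =
      ∑' k, ENNReal.ofReal (ℓ (n + k) / ((s (n + k) : ℝ) * s (n + k + 1))) := fun n => by
    rw [setLIntegral_tail_eq_tsum ht ht0.ge htL (hcell fun r => ENNReal.ofReal r⁻¹)]
    exact tsum_congr fun k => by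
      rw [hℓt, ← ENNReal.ofReal_mul (by positivity), inv_mul_eq_div]
  simp only [← hA, ← hB]
  have htn : ∀ n, 0 ≤ t n := fun n => ht0.ge.trans (ht.monotone n.zero_le)
  exact tendsto_mul_nhds_zero_iff_of_cells (F := approachBelow L)
    (fun x x' h => lintegral_mono_set (Ioo_subset_Ioo_right h))
    (fun x x' h =>
      lintegral_mono_set (ofPred_subset_ofPred.2 fun y hy => ⟨h.trans_lt hy.1, hy.2⟩))
    (eventually_exists_mem_Icc_approachBelow ht ht0.ge htL)
    (tendsto_midpoint_approachBelow ht ht0.ge htL) ofNat_ne_top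
    (fun n => setLIntegral_Ioo_zero_le_two_mul_midpoint (htn n) (ht n.lt_succ_self).le
      (hcell ENNReal.ofReal n))
    (fun n => setLIntegral_tail_le_two_mul_midpoint (htn n) (ht n.lt_succ_self)
      (ofReal_lt_of_strictMono_of_tendsto ht ht0.ge htL _).le
      (hcell (fun r => ENNReal.ofReal r⁻¹) n))

/-- analytic content of Theorem 5.3, Kac–Krein discreteness
criterion.  The Kac–Krein function `Φ(x) = ∫₀ˣ μ · ∫ₓᴸ 1/μ` tends to `0` as
`x → L⁻` (as `x → +∞` when `L = ∞`) iff
`(Σ_{k ≤ n} sₖ sₖ₊₁ ℓₖ)(Σ_{k ≥ n} ℓₖ/(sₖ sₖ₊₁)) → 0`. -/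
theorem kacKrein_tendsto_zero_iff (s : ℕ → ℕ) (hs : ∀ n, 1 ≤ s n)
    (ℓ : ℕ → ℝ) (hℓ : ∀ n, 0 < ℓ n)
    (t : ℕ → ℝ) (ht0 : t 0 = 0) (htrec : ∀ n, t (n + 1) = t n + ℓ n)
    (L : ℝ≥0∞) (hL : L = ∑' n, ENNReal.ofReal (ℓ n))
    (μ : ℝ → ℝ)
    (hμ : ∀ n : ℕ, ∀ x ∈ Set.Ico (t n) (t (n + 1)), μ x = (s n : ℝ) * (s (n + 1) : ℝ))
    (hμout : ∀ x : ℝ, (x < 0 ∨ L ≤ ENNReal.ofReal x) → μ x = 1) :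
    Tendsto
      (fun x : ℝ =>
        (∫⁻ y in Set.Ioo 0 x, ENNReal.ofReal (μ y)) *
          (∫⁻ y in {y : ℝ | x < y ∧ ENNReal.ofReal y < L}, ENNReal.ofReal ((μ y)⁻¹)))
      (if L = ∞ then atTop else 𝓝[<] L.toReal) (𝓝 0) ↔
    Tendsto
      (fun n : ℕ =>
        (∑ k ∈ Finset.range (n + 1), ENNReal.ofReal ((s k : ℝ) * (s (k + 1) : ℝ) * ℓ k)) *
          (∑' k : ℕ, ENNReal.ofReal (ℓ (n + k) / ((s (n + k) : ℝ) * (s (n + k + 1) : ℝ)))))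
      atTop (𝓝 0) :=
  kacKrein_tendsto_zero_iff_general s ℓ hℓ t ht0 htrec L hL μ hμ
end

section
/- Let s : ℕ → ℕ with s n ≥ 1 for all n and ℓ : ℕ → ℝ with ℓ n > 0 for all n. If lim_{n→∞} (Σ_{k=0}^n s_k s_{k+1} ℓ_k)·(Σ_{k=n}^∞ ℓ_k/(s_k s_{k+1})) = 0, where the tail sums and the products are taken in [0,∞], then ℓ_n → 0 as n → ∞ and Σ_{k=0}^∞ ℓ_k/(s_k s_{k+1}) < ∞. -/
open Filter Topology
open scoped ENNReal

/-!
The `n`-th product dominates its diagonal term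
`sₙ sₙ₊₁ ℓₙ · ℓₙ / (sₙ sₙ₊₁) = ℓₙ²`, so `ℓₙ² → 0`. Moreover, once a product is finite its
first factor is positive, hence the tail `Σ_{k ≥ n} ℓₖ/(sₖ sₖ₊₁)` is finite, and so is the
whole series.
-/

namespace ENNReal

theorem ofReal_mul_mul_ofReal_div {c x : ℝ} (hc : 0 < c) (hx : 0 ≤ x) :
    ENNReal.ofReal (c * x) * ENNReal.ofReal (x / c) = ENNReal.ofReal (x ^ 2) := by
  rw [← ENNReal.ofReal_mul (by positivity)]
  congr 1
  field_simp

theorem mul_le_sum_range_succ_mul_tsum_nat_add (f g : ℕ → ℝ≥0∞) (n : ℕ) :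
    f n * g n ≤ (∑ k ∈ Finset.range (n + 1), f k) * ∑' k, g (n + k) :=
  mul_le_mul' (Finset.single_le_sum (fun _ _ => zero_le) (Finset.self_mem_range_succ n))
    (ENNReal.le_tsum 0)

theorem tsum_lt_top_of_tsum_nat_add_lt_top {f : ℕ → ℝ≥0∞} (hf : ∀ k, f k ≠ ∞) (N : ℕ)
    (h : ∑' k, f (N + k) < ∞) : ∑' k, f k < ∞ := by
  rw [← ENNReal.summable.sum_add_tsum_nat_add' (k := N)]
  refine ENNReal.add_lt_top.2 ⟨ENNReal.sum_lt_top.2 fun k _ => (hf k).lt_top, ?_⟩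
  simpa only [add_comm] using h

end ENNReal

theorem Real.tendsto_zero_of_ofReal_sq_le {ι : Type*} {l : Filter ι} {u : ι → ℝ}
    {P : ι → ℝ≥0∞} (hP : Tendsto P l (𝓝 0)) (hu : ∀ i, ENNReal.ofReal (u i ^ 2) ≤ P i) :
    Tendsto u l (𝓝 0) := by
  have hsq : Tendsto (fun i => u i ^ 2) l (𝓝 0) := by
    have := tendsto_of_tendsto_of_tendsto_of_le_of_le tendsto_const_nhds hP (fun _ => zero_le) hu
    rw [← ENNReal.tendsto_toReal_zero_iff] at this
    simpa only [ENNReal.toReal_ofReal (sq_nonneg _)] using this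
  rw [tendsto_zero_iff_abs_tendsto_zero]
  simpa only [Function.comp_def, Real.sqrt_zero, Real.sqrt_sq_eq_abs] using hsq.sqrt

/-- Remark 5.4.  If
`(Σ_{k ≤ n} sₖ sₖ₊₁ ℓₖ)(Σ_{k ≥ n} ℓₖ/(sₖ sₖ₊₁)) → 0` (in `[0,∞]`), then
`ℓₙ → 0` and `Σ_k ℓₖ/(sₖ sₖ₊₁) < ∞`. -/
theorem discreteness_condition_consequences (s : ℕ → ℕ) (hs : ∀ n, 1 ≤ s n)
    (ℓ : ℕ → ℝ) (hℓ : ∀ n, 0 < ℓ n)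
    (h : Tendsto
      (fun n : ℕ =>
        (∑ k ∈ Finset.range (n + 1), ENNReal.ofReal ((s k : ℝ) * (s (k + 1) : ℝ) * ℓ k)) *
          (∑' k : ℕ, ENNReal.ofReal (ℓ (n + k) / ((s (n + k) : ℝ) * (s (n + k + 1) : ℝ)))))
      atTop (𝓝 0)) :
    Tendsto ℓ atTop (𝓝 0) ∧
      (∑' k : ℕ, ENNReal.ofReal (ℓ k / ((s k : ℝ) * (s (k + 1) : ℝ)))) < ∞ := by
  set a : ℕ → ℝ≥0∞ := fun k => ENNReal.ofReal ((s k : ℝ) * (s (k + 1) : ℝ) * ℓ k)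
  set b : ℕ → ℝ≥0∞ := fun k => ENNReal.ofReal (ℓ k / ((s k : ℝ) * (s (k + 1) : ℝ)))
  have hs_pos : ∀ k, (0 : ℝ) < s k * s (k + 1) := fun k => by
    have := hs k; have := hs (k + 1); positivity
  refine ⟨Real.tendsto_zero_of_ofReal_sq_le h fun n => ?_, ?_⟩
  · rw [← ENNReal.ofReal_mul_mul_ofReal_div (hs_pos n) (hℓ n).le]
    exact ENNReal.mul_le_sum_range_succ_mul_tsum_nat_add a b n
  · obtain ⟨N, hN⟩ := (h.eventually_ne ENNReal.zero_ne_top).exists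
    have ha : ∑ k ∈ Finset.range (N + 1), a k ≠ 0 :=
      ((ENNReal.ofReal_pos.2 (mul_pos (hs_pos 0) (hℓ 0))).trans_le
        (Finset.single_le_sum (f := a) (fun _ _ => zero_le) (Finset.mem_range.2 N.succ_pos))).ne'
    exact ENNReal.tsum_lt_top_of_tsum_nat_add_lt_top (fun _ => ENNReal.ofReal_ne_top) N
      (ENNReal.lt_top_of_mul_ne_top_right hN ha)
end

section
/- The following equality holds in [0,∞]: ∫_{(0,L)} μ(x)⁻¹ (∫_{(0,x)} μ(s) ds) dx = Σ_{n=0}^∞ (ℓ_n/(s_n s_{n+1})) Σ_{k=0}^{n−1} s_k s_{k+1} ℓ_k + (1/2) Σ_{n=0}^∞ ℓ_n². -/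
open MeasureTheory Set
open scoped ENNReal

/-!
On the `n`-th edge `[t n, t (n + 1))` the weight is the constant `c n = s n * s (n + 1)`, so the
primitive `∫₀ˣ μ` is piecewise linear, equal to `∑_{k<n} c k ℓ k + c n (x - t n)` there. Dividing
by `μ = c n` and integrating over the edge gives `ℓ n / c n * ∑_{k<n} c k ℓ k + ℓ n ^ 2 / 2`, and
the domain `{0 < x < L}` is the disjoint union of the edges `(t n, t (n + 1)]`.
-/

theorem StrictMono.iUnion_Ioc_succ {t : ℕ → ℝ} (ht : StrictMono t) :
    ⋃ n, Ioc (t n) (t (n + 1)) = {x | t 0 < x ∧ ∃ n, x < t n} := by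
  ext x
  simp only [mem_iUnion, mem_Ioc, mem_ofPred_eq]
  constructor
  · rintro ⟨n, hxn, hxn'⟩
    exact ⟨(ht.monotone n.zero_le).trans_lt hxn, n + 2, hxn'.trans_lt (ht (by omega))⟩
  · rintro ⟨hx0, m, hxm⟩
    have hx : x ∈ Ioc (t 0) (t m) := ⟨hx0, hxm.le⟩
    rw [← ht.monotone.biUnion_Ico_Ioc_map_succ] at hx
    simp only [mem_iUnion, exists_prop] at hx
    obtain ⟨n, -, hn⟩ := hx
    exact ⟨n, hn⟩

theorem ENNReal.ofReal_lt_iSup_ofReal_iff {t : ℕ → ℝ} {x : ℝ} (hx : 0 < x) :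
    ENNReal.ofReal x < ⨆ n, ENNReal.ofReal (t n) ↔ ∃ n, x < t n := by
  simp only [lt_iSup_iff, ENNReal.ofReal_lt_ofReal_iff']
  exact exists_congr fun n => ⟨And.left, fun h => ⟨h, hx.trans h⟩⟩

theorem setOf_lt_tsum_ofReal_eq_iUnion_Ioc {t ℓ : ℕ → ℝ} (ht0 : t 0 = 0)
    (htrec : ∀ n, t (n + 1) = t n + ℓ n) (hℓ : ∀ n, 0 < ℓ n) :
    {x : ℝ | 0 < x ∧ ENNReal.ofReal x < ∑' n, ENNReal.ofReal (ℓ n)} =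
      ⋃ n, Ioc (t n) (t (n + 1)) := by
  have ht_sum : ∀ n, t n = ∑ k ∈ Finset.range n, ℓ k := fun n => by
    induction n with
    | zero => exact ht0
    | succ n ih => rw [htrec, ih, Finset.sum_range_succ]
  have htsum_iSup : ∑' n, ENNReal.ofReal (ℓ n) = ⨆ n, ENNReal.ofReal (t n) := by
    simp only [ENNReal.tsum_eq_iSup_nat, ht_sum,
      ENNReal.ofReal_sum_of_nonneg fun k _ => (hℓ k).le]
  rw [(strictMono_nat_of_lt_succ fun n => by linarith [htrec n, hℓ n]).iUnion_Ioc_succ, ht0,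
    htsum_iSup]
  ext x
  exact and_congr_right ENNReal.ofReal_lt_iSup_ofReal_iff

theorem setLIntegral_Ioo_ofReal_sub {a b : ℝ} (hab : a ≤ b) :
    ∫⁻ x in Ioo a b, ENNReal.ofReal (x - a) = 1 / 2 * ENNReal.ofReal ((b - a) ^ 2) := by
  have hint : IntegrableOn (fun x => x - a) (Ioo a b) :=
    (continuous_id.sub continuous_const).integrableOn_Icc.mono_set Ioo_subset_Icc_self
  rw [← ofReal_integral_eq_lintegral_ofReal hint
    ((ae_restrict_iff' measurableSet_Ioo).2 (ae_of_all _ fun x hx => sub_nonneg.2 hx.1.le)),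
    ← integral_Ioc_eq_integral_Ioo, ← intervalIntegral.integral_of_le hab,
    intervalIntegral.integral_comp_sub_right (fun x => x), integral_id, sub_self]
  rw [ENNReal.ofReal_div_of_pos two_pos, ENNReal.div_eq_inv_mul]
  simp

theorem setLIntegral_Ico_of_piecewise_const {t ℓ : ℕ → ℝ} (htrec : ∀ n, t (n + 1) = t n + ℓ n)
    (hℓ : ∀ n, 0 ≤ ℓ n) {f : ℝ → ℝ≥0∞} {c : ℕ → ℝ≥0∞}
    (hf : ∀ n, ∀ x ∈ Ico (t n) (t (n + 1)), f x = c n) (n : ℕ) :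
    ∀ x ∈ Icc (t n) (t (n + 1)), ∫⁻ y in Ico (t 0) x, f y =
      ∑ k ∈ Finset.range n, c k * ENNReal.ofReal (ℓ k) + c n * ENNReal.ofReal (x - t n) := by
  have hmono : Monotone t := monotone_nat_of_le_succ fun n => by linarith [htrec n, hℓ n]
  have hconst : ∀ n, ∀ x ∈ Icc (t n) (t (n + 1)),
      ∫⁻ y in Ico (t n) x, f y = c n * ENNReal.ofReal (x - t n) := fun n x hx => by
    rw [setLIntegral_congr_fun measurableSet_Ico fun y hy => hf n y ⟨hy.1, hy.2.trans_le hx.2⟩,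
      setLIntegral_const, Real.volume_Ico]
  induction n with
  | zero => simpa using hconst 0
  | succ n ih =>
    intro x hx
    rw [← Ico_union_Ico_eq_Ico (hmono (n + 1).zero_le) hx.1,
      lintegral_union measurableSet_Ico Ico_disjoint_Ico_same,
      ih _ ⟨hmono n.le_succ, le_rfl⟩, hconst _ x hx, Finset.sum_range_succ, htrec n,
      add_sub_cancel_left]

theorem setLIntegral_Ioo_inv_mul_primitive {t ℓ : ℕ → ℝ} (htrec : ∀ n, t (n + 1) = t n + ℓ n)
    (hℓ : ∀ n, 0 ≤ ℓ n) {μ : ℝ → ℝ} {w : ℕ → ℝ} (hw : ∀ n, 0 < w n)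
    (hμ : ∀ n, ∀ x ∈ Ico (t n) (t (n + 1)), μ x = w n) (n : ℕ) :
    ∫⁻ x in Ioo (t n) (t (n + 1)),
        ENNReal.ofReal (μ x)⁻¹ * ∫⁻ y in Ioo (t 0) x, ENNReal.ofReal (μ y) =
      ENNReal.ofReal (ℓ n / w n) * ∑ k ∈ Finset.range n, ENNReal.ofReal (w k * ℓ k) +
        1 / 2 * ENNReal.ofReal (ℓ n ^ 2) := by
  set B := ∑ k ∈ Finset.range n, ENNReal.ofReal (w k * ℓ k)
  have hprimitive : ∀ x ∈ Ioo (t n) (t (n + 1)),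
      ENNReal.ofReal (μ x)⁻¹ * ∫⁻ y in Ioo (t 0) x, ENNReal.ofReal (μ y) =
        ENNReal.ofReal (w n)⁻¹ * B + ENNReal.ofReal (x - t n) := fun x hx => by
    rw [hμ n x ⟨hx.1.le, hx.2⟩, setLIntegral_congr Ioo_ae_eq_Ico,
      setLIntegral_Ico_of_piecewise_const htrec hℓ (c := fun k => ENNReal.ofReal (w k))
        (fun k y hy => by rw [hμ k y hy]) n x ⟨hx.1.le, hx.2.le⟩,
      mul_add, ← mul_assoc, ← ENNReal.ofReal_mul (inv_nonneg.2 (hw n).le),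
      inv_mul_cancel₀ (hw n).ne', ENNReal.ofReal_one, one_mul]
    simp only [B, ← ENNReal.ofReal_mul (hw _).le]
  rw [setLIntegral_congr_fun measurableSet_Ioo hprimitive, lintegral_add_left measurable_const,
    setLIntegral_const, Real.volume_Ioo, setLIntegral_Ioo_ofReal_sub (by linarith [htrec n, hℓ n]),
    htrec n, add_sub_cancel_left, mul_right_comm, ← ENNReal.ofReal_mul (inv_nonneg.2 (hw n).le),
    inv_mul_eq_div]

theorem krein_trace_integral_eval_general (s : ℕ → ℕ) (hs : ∀ n, 1 ≤ s n)
    (ℓ : ℕ → ℝ) (hℓ : ∀ n, 0 < ℓ n)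
    (t : ℕ → ℝ) (ht0 : t 0 = 0) (htrec : ∀ n, t (n + 1) = t n + ℓ n)
    (L : ℝ≥0∞) (hL : L = ∑' n, ENNReal.ofReal (ℓ n))
    (μ : ℝ → ℝ)
    (hμ : ∀ n : ℕ, ∀ x ∈ Set.Ico (t n) (t (n + 1)), μ x = (s n : ℝ) * (s (n + 1) : ℝ)) :
    (∫⁻ x in {x : ℝ | 0 < x ∧ ENNReal.ofReal x < L},
        ENNReal.ofReal ((μ x)⁻¹) * ∫⁻ y in Set.Ioo 0 x, ENNReal.ofReal (μ y)) =
      (∑' n : ℕ,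
        ENNReal.ofReal (ℓ n / ((s n : ℝ) * (s (n + 1) : ℝ))) *
          ∑ k ∈ Finset.range n, ENNReal.ofReal ((s k : ℝ) * (s (k + 1) : ℝ) * ℓ k)) +
      (1 / 2 : ℝ≥0∞) * ∑' n : ℕ, ENNReal.ofReal (ℓ n ^ 2) := by
  have hmono : StrictMono t := strictMono_nat_of_lt_succ fun n => by linarith [htrec n, hℓ n]
  have hdisj : Pairwise (Function.onFun Disjoint fun n => Ioc (t n) (t (n + 1))) :=
    hmono.monotone.pairwise_disjoint_on_Ioc_succ
  have hw : ∀ n, (0 : ℝ) < s n * s (n + 1) := fun n =>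
    mul_pos (Nat.cast_pos.2 (hs n)) (Nat.cast_pos.2 (hs (n + 1)))
  rw [hL, setOf_lt_tsum_ofReal_eq_iUnion_Ioc ht0 htrec hℓ,
    lintegral_iUnion (fun n => measurableSet_Ioc) hdisj, ← ENNReal.tsum_mul_left, ← ENNReal.tsum_add]
  refine tsum_congr fun n => ?_
  rw [setLIntegral_congr Ioo_ae_eq_Ioc.symm, ← ht0]
  exact setLIntegral_Ioo_inv_mul_primitive htrec (fun n => (hℓ n).le) hw hμ n

/-- key computation in the proof of Theorem 5.5.  In `[0,∞]`:
`∫₀ᴸ (1/μ(x)) ∫₀ˣ μ(s) ds dx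
  = Σₙ (ℓₙ/(sₙsₙ₊₁)) Σ_{k<n} sₖsₖ₊₁ℓₖ + (1/2) Σₙ ℓₙ²`. -/
theorem krein_trace_integral_eval (s : ℕ → ℕ) (hs : ∀ n, 1 ≤ s n)
    (ℓ : ℕ → ℝ) (hℓ : ∀ n, 0 < ℓ n)
    (t : ℕ → ℝ) (ht0 : t 0 = 0) (htrec : ∀ n, t (n + 1) = t n + ℓ n)
    (L : ℝ≥0∞) (hL : L = ∑' n, ENNReal.ofReal (ℓ n))
    (μ : ℝ → ℝ)
    (hμ : ∀ n : ℕ, ∀ x ∈ Set.Ico (t n) (t (n + 1)), μ x = (s n : ℝ) * (s (n + 1) : ℝ))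
    (hμout : ∀ x : ℝ, (x < 0 ∨ L ≤ ENNReal.ofReal x) → μ x = 1) :
    (∫⁻ x in {x : ℝ | 0 < x ∧ ENNReal.ofReal x < L},
        ENNReal.ofReal ((μ x)⁻¹) * ∫⁻ y in Set.Ioo 0 x, ENNReal.ofReal (μ y)) =
      (∑' n : ℕ,
        ENNReal.ofReal (ℓ n / ((s n : ℝ) * (s (n + 1) : ℝ))) *
          ∑ k ∈ Finset.range n, ENNReal.ofReal ((s k : ℝ) * (s (k + 1) : ℝ) * ℓ k)) +
      (1 / 2 : ℝ≥0∞) * ∑' n : ℕ, ENNReal.ofReal (ℓ n ^ 2) :=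
  krein_trace_integral_eval_general s hs ℓ hℓ t ht0 htrec L hL μ hμ
end

section
/- The isoperimetric constant of the radially symmetric antitree A satisfies α(A) = inf_{n ∈ ℕ} s_n s_{n+1} / (Σ_{k=0}^n s_k s_{k+1} ℓ_k). -/
open Finset
open scoped BigOperators

/-- The radially symmetric antitree with sphere numbers `s n`:  the vertex set
is `Σ n, Fin (s n)` and two vertices are adjacent iff they lie in consecutive
combinatorial spheres. -/
def antitreeGraph (s : ℕ → ℕ) : SimpleGraph (Σ n : ℕ, Fin (s n)) where
  Adj v w := v.1 = w.1 + 1 ∨ w.1 = v.1 + 1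
  symm := ⟨by intro v w h; exact h.symm⟩
  loopless := ⟨by intro v h; rcases h with h | h <;> omega⟩

/-- Length of an edge of the antitree: an edge joining sphere `n` and sphere
`n+1` has length `ℓ n` (the level of an edge is the minimum of the levels of
its endpoints). -/
noncomputable def antitreeEdgeLength (s : ℕ → ℕ) (ℓ : ℕ → ℝ) :
    Sym2 (Σ n : ℕ, Fin (s n)) → ℝ :=
  Sym2.lift ⟨fun v w => ℓ (min v.1 w.1), fun v w => by simp [min_comm]⟩

/-! The balls `ball s n`, made of the spheres `S_0, …, S_{n+1}`, have boundary `S_{n+1}` and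
attain the ratio `s_n s_{n+1} / Σ_{k ≤ n} s_k s_{k+1} ℓ_k`. For the lower bound, describe a
finite subgraph by the number `E_k` of its edges between `S_k` and `S_{k+1}` and the number `I_k`
of its interior vertices in `S_k`: then `vol = Σ E_k ℓ_k`,
`deg ∂ = Σ (2 E_k - I_k s_{k+1} - I_{k+1} s_k)` and `I_k s_{k+1}, I_{k+1} s_k ≤ E_k`. Under these
constraints `c · vol ≤ deg ∂`, for `c` the infimum of the ratios, telescopes sphere by sphere
with the potential `c I_k (Σ_{j < k} s_j s_{j+1} ℓ_j) / s_k`. -/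

theorem finsum_mem_sigma_eq_sum_range {β : ℕ → Type*} [∀ k, Fintype (β k)] {M : Type*}
    [AddCommMonoid M] {S : Set (Σ k, β k)} {N : ℕ} (hS : ∀ x ∈ S, x.1 < N)
    (f : (Σ k, β k) → M) [DecidablePred (· ∈ S)] :
    ∑ᶠ x ∈ S, f x = ∑ k ∈ range N, ∑ b with ⟨k, b⟩ ∈ S, f ⟨k, b⟩ := by
  have hS' : S = ↑(((range N).sigma fun _ => univ).filter (· ∈ S)) := by
    ext x
    simp only [coe_filter, mem_sigma, mem_range, mem_univ, and_true, Set.mem_ofPred_eq]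
    exact ⟨fun hx => ⟨hS x hx, hx⟩, And.right⟩
  conv_lhs => rw [hS']
  rw [finsum_mem_coe_finset, sum_filter, sum_sigma]
  simp only [sum_filter]

theorem potential_step {σ₁ σ₂ ℓ L c e x y : ℝ} (h₁ : 0 < σ₁) (h₂ : 0 < σ₂) (hcL : 0 ≤ c * L)
    (hc : c * (L + σ₁ * σ₂ * ℓ) ≤ σ₁ * σ₂) (hx : x * σ₂ ≤ e) (hy : y * σ₁ ≤ e) :
    c * e * ℓ ≤ 2 * e - x * σ₂ - y * σ₁ + (c * (L + σ₁ * σ₂ * ℓ) * y / σ₂ - c * L * x / σ₁) := by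
  have hσ := mul_pos h₁ h₂
  have hcℓ : 0 ≤ 2 - c * ℓ := by nlinarith
  rw [← sub_nonneg]
  refine nonneg_of_mul_nonneg_left ?_ hσ
  have expand : (2 * e - x * σ₂ - y * σ₁ +
      (c * (L + σ₁ * σ₂ * ℓ) * y / σ₂ - c * L * x / σ₁) - c * e * ℓ) * (σ₁ * σ₂) =
      σ₁ * σ₂ * ((2 - c * ℓ) * e - x * σ₂ - y * σ₁) + c * L * (y * σ₁ - x * σ₂) +
        c * ℓ * (σ₁ * σ₂) * (y * σ₁) := by
    field_simp
    ring
  rw [expand]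
  rcases le_total (y * σ₁) (x * σ₂) with h | h
  · linarith [mul_nonneg (mul_nonneg hσ.le hcℓ) (sub_nonneg.2 hx),
      mul_nonneg (sub_nonneg.2 hc) (sub_nonneg.2 h)]
  · linarith [mul_nonneg (mul_nonneg hσ.le hcℓ) (sub_nonneg.2 hy),
      mul_nonneg (add_nonneg hσ.le hcL) (sub_nonneg.2 h)]

theorem mul_sum_le_of_potential {σ ℓ E I : ℕ → ℝ} {c : ℝ} {N : ℕ} (hσ : ∀ k, 0 < σ k)
    (hℓ : ∀ k, 0 ≤ ℓ k) (hc : 0 ≤ c)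
    (hcσ : ∀ k, c * ∑ j ∈ range (k + 1), σ j * σ (j + 1) * ℓ j ≤ σ k * σ (k + 1))
    (hIE : ∀ k, I k * σ (k + 1) ≤ E k) (hIE' : ∀ k, I (k + 1) * σ k ≤ E k) (hIN : I N = 0) :
    c * ∑ k ∈ range N, E k * ℓ k ≤
      ∑ k ∈ range N, (2 * E k - I k * σ (k + 1) - I (k + 1) * σ k) := by
  set L : ℕ → ℝ := fun k => ∑ j ∈ range k, σ j * σ (j + 1) * ℓ j
  set φ : ℕ → ℝ := fun k => c * L k * I k / σ k
  have step (k : ℕ) : c * (E k * ℓ k) ≤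
      2 * E k - I k * σ (k + 1) - I (k + 1) * σ k + (φ (k + 1) - φ k) := by
    have hL : 0 ≤ L k := sum_nonneg fun j _ => by
      have := hσ j; have := hσ (j + 1); have := hℓ j; positivity
    have := potential_step (hσ k) (hσ (k + 1)) (mul_nonneg hc hL)
      (by rw [← sum_range_succ]; exact hcσ k) (hIE k) (hIE' k)
    simp only [φ, L, sum_range_succ] at this ⊢
    linarith
  calc c * ∑ k ∈ range N, E k * ℓ k
      ≤ ∑ k ∈ range N, (2 * E k - I k * σ (k + 1) - I (k + 1) * σ k + (φ (k + 1) - φ k)) := by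
        rw [mul_sum]; exact sum_le_sum fun k _ => step k
    _ = ∑ k ∈ range N, (2 * E k - I k * σ (k + 1) - I (k + 1) * σ k) := by
        rw [sum_add_distrib, sum_range_sub]
        simp [φ, L, hIN]

namespace Antitree

open SimpleGraph

open scoped Classical

variable {s : ℕ → ℕ}

noncomputable def sphereDegree (G' : (antitreeGraph s).Subgraph) (v : Σ n, Fin (s n)) (m : ℕ) :
    ℕ :=
  #{j : Fin (s m) | G'.Adj v ⟨m, j⟩}

-- At sphere `0` the truncated `v.1 - 1` is `0` again, and the second part is empty.
theorem neighborSet_eq_union (G' : (antitreeGraph s).Subgraph) (v : Σ n, Fin (s n)) :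
    G'.neighborSet v = Sigma.mk (v.1 + 1) '' {j | G'.Adj v ⟨v.1 + 1, j⟩} ∪
      Sigma.mk (v.1 - 1) '' {j | G'.Adj v ⟨v.1 - 1, j⟩} := by
  obtain ⟨n, i⟩ := v
  ext ⟨m, j⟩
  simp only [Subgraph.mem_neighborSet, Set.mem_union, Set.mem_image, Set.mem_ofPred_eq]
  constructor
  · intro h
    rcases G'.adj_sub h with rfl | rfl
    · exact Or.inr ⟨j, h, rfl⟩
    · exact Or.inl ⟨j, h, rfl⟩
  · rintro (⟨j, h, hj⟩ | ⟨j, h, hj⟩) <;> cases hj <;> exact h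

theorem neighborSet_finite (G' : (antitreeGraph s).Subgraph) (v : Σ n, Fin (s n)) :
    (G'.neighborSet v).Finite := by
  rw [neighborSet_eq_union]
  exact Set.toFinite _

theorem ncard_neighborSet (G' : (antitreeGraph s).Subgraph) (v : Σ n, Fin (s n)) :
    (G'.neighborSet v).ncard = sphereDegree G' v (v.1 + 1) + sphereDegree G' v (v.1 - 1) := by
  have hdisj : Disjoint
      (Sigma.mk (β := fun n => Fin (s n)) (v.1 + 1) '' {j | G'.Adj v ⟨v.1 + 1, j⟩})
      (Sigma.mk (v.1 - 1) '' {j | G'.Adj v ⟨v.1 - 1, j⟩}) := by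
    rw [Set.disjoint_left]
    rintro _ ⟨j, -, rfl⟩ ⟨j', -, h⟩
    have := congrArg Sigma.fst h
    simp only at this
    omega
  rw [neighborSet_eq_union, Set.ncard_union_eq hdisj,
    Set.ncard_image_of_injective _ sigma_mk_injective,
    Set.ncard_image_of_injective _ sigma_mk_injective, Set.ncard_eq_toFinset_card',
    Set.ncard_eq_toFinset_card']
  simp [sphereDegree]

theorem sphereDegree_eq_zero_of_notMem {G' : (antitreeGraph s).Subgraph} {v : Σ n, Fin (s n)}
    (hv : v ∉ G'.verts) (m : ℕ) : sphereDegree G' v m = 0 := by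
  simp only [sphereDegree, card_eq_zero, filter_eq_empty_iff]
  exact fun j _ h => hv (G'.edge_vert h)

theorem sphereDegree_self (G' : (antitreeGraph s).Subgraph) (k : ℕ) (i : Fin (s k)) :
    sphereDegree G' ⟨k, i⟩ k = 0 := by
  simp only [sphereDegree, card_eq_zero, filter_eq_empty_iff]
  intro j _ h
  have := G'.adj_sub h
  simp only [antitreeGraph] at this
  omega

theorem sphereDegree_top {k m : ℕ} (hkm : k = m + 1 ∨ m = k + 1) (i : Fin (s k)) :
    sphereDegree ⊤ ⟨k, i⟩ m = s m := by
  have hadj : ∀ j, (antitreeGraph s).Adj ⟨k, i⟩ ⟨m, j⟩ := fun _ => hkm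
  simp [sphereDegree, hadj]

def IsBoundary (G' : (antitreeGraph s).Subgraph) (v : Σ n, Fin (s n)) : Prop :=
  (G'.neighborSet v).ncard < ((antitreeGraph s).neighborSet v).ncard

theorem not_isBoundary_iff {G' : (antitreeGraph s).Subgraph} {v : Σ n, Fin (s n)} :
    ¬ IsBoundary G' v ↔ G'.neighborSet v = (antitreeGraph s).neighborSet v := by
  refine ⟨fun h => Set.eq_of_subset_of_ncard_le (G'.neighborSet_subset v) (not_lt.mp h)
    (neighborSet_finite ⊤ v), fun h => ?_⟩
  rw [IsBoundary, h]
  exact lt_irrefl _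

theorem sphereDegree_eq_top_of_not_isBoundary {G' : (antitreeGraph s).Subgraph}
    {v : Σ n, Fin (s n)} (hv : ¬ IsBoundary G' v) (m : ℕ) :
    sphereDegree G' v m = sphereDegree ⊤ v m := by
  have h := Set.ext_iff.mp (not_isBoundary_iff.mp hv)
  simp only [Subgraph.mem_neighborSet, mem_neighborSet] at h
  simp only [sphereDegree, Subgraph.top_adj, h]

noncomputable def crossingCount (G' : (antitreeGraph s).Subgraph) (k : ℕ) : ℕ :=
  #{p : Fin (s k) × Fin (s (k + 1)) | G'.Adj ⟨k, p.1⟩ ⟨k + 1, p.2⟩}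

noncomputable def interiorCount (G' : (antitreeGraph s).Subgraph) (k : ℕ) : ℕ :=
  #{i : Fin (s k) | ¬ IsBoundary G' ⟨k, i⟩}

section subgraph

variable (G' : (antitreeGraph s).Subgraph)

theorem sum_sphereDegree_succ (k : ℕ) :
    ∑ i, sphereDegree G' ⟨k, i⟩ (k + 1) = crossingCount G' k := by
  simp only [sphereDegree, crossingCount, card_filter, Fintype.sum_prod_type]

theorem sum_sphereDegree_pred (k : ℕ) :
    ∑ j, sphereDegree G' ⟨k + 1, j⟩ k = crossingCount G' k := by
  simp only [sphereDegree, crossingCount, card_filter, Fintype.sum_prod_type]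
  rw [sum_comm]
  simp only [G'.adj_comm]

theorem sum_boundary_sphereDegree_add {k m : ℕ} (hkm : k = m + 1 ∨ m = k + 1) :
    ∑ i with IsBoundary G' ⟨k, i⟩, sphereDegree G' ⟨k, i⟩ m + interiorCount G' k * s m =
      ∑ i, sphereDegree G' ⟨k, i⟩ m := by
  rw [← sum_filter_add_sum_filter_not univ (fun i => IsBoundary G' ⟨k, i⟩), interiorCount,
    sum_congr rfl fun i hi => (sphereDegree_eq_top_of_not_isBoundary (mem_filter.mp hi).2 m).trans
      (sphereDegree_top hkm i), sum_const, smul_eq_mul]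

theorem interiorCount_mul_le_crossingCount (k : ℕ) :
    interiorCount G' k * s (k + 1) ≤ crossingCount G' k := by
  rw [← sum_sphereDegree_succ, ← sum_boundary_sphereDegree_add G' (Or.inr rfl)]
  exact Nat.le_add_left _ _

theorem interiorCount_succ_mul_le_crossingCount (k : ℕ) :
    interiorCount G' (k + 1) * s k ≤ crossingCount G' k := by
  rw [← sum_sphereDegree_pred, ← sum_boundary_sphereDegree_add G' (Or.inl rfl)]
  exact Nat.le_add_left _ _

theorem sum_boundary_sphereDegree_succ (k : ℕ) :
    ∑ i with IsBoundary G' ⟨k, i⟩, (sphereDegree G' ⟨k, i⟩ (k + 1) : ℝ) =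
      crossingCount G' k - interiorCount G' k * s (k + 1) := by
  rw [eq_sub_iff_add_eq, ← sum_sphereDegree_succ, ← sum_boundary_sphereDegree_add G' (Or.inr rfl)]
  push_cast
  rfl

theorem sum_boundary_sphereDegree_pred (k : ℕ) :
    ∑ j with IsBoundary G' ⟨k + 1, j⟩, (sphereDegree G' ⟨k + 1, j⟩ k : ℝ) =
      crossingCount G' k - interiorCount G' (k + 1) * s k := by
  rw [eq_sub_iff_add_eq, ← sum_sphereDegree_pred, ← sum_boundary_sphereDegree_add G' (Or.inl rfl)]
  push_cast
  rfl

noncomputable def boundaryDegree : ℝ :=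
  ∑ᶠ v ∈ {v ∈ G'.verts | IsBoundary G' v}, ((G'.neighborSet v).ncard : ℝ)

theorem sum_boundary_ncard_neighborSet (k : ℕ) :
    ∑ i with (⟨k, i⟩ : Σ n, Fin (s n)) ∈ {v ∈ G'.verts | IsBoundary G' v},
        ((G'.neighborSet ⟨k, i⟩).ncard : ℝ) =
      ∑ i with IsBoundary G' ⟨k, i⟩, (sphereDegree G' ⟨k, i⟩ (k + 1) : ℝ) +
        ∑ i with IsBoundary G' ⟨k, i⟩, (sphereDegree G' ⟨k, i⟩ (k - 1) : ℝ) := by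
  rw [← sum_add_distrib]
  simp only [sum_filter, Set.mem_sep_iff]
  refine sum_congr rfl fun i _ => ?_
  by_cases hv : (⟨k, i⟩ : Σ n, Fin (s n)) ∈ G'.verts
  · simp [hv, ncard_neighborSet]
  · simp [hv, sphereDegree_eq_zero_of_notMem hv]

theorem boundaryDegree_eq_sum {N : ℕ} (hN : ∀ v ∈ G'.verts, v.1 < N) :
    boundaryDegree G' = ∑ k ∈ range N, (2 * crossingCount G' k -
      interiorCount G' k * s (k + 1) - interiorCount G' (k + 1) * s k : ℝ) := by
  set down : ℕ → ℝ := fun k => ∑ i with IsBoundary G' ⟨k, i⟩, (sphereDegree G' ⟨k, i⟩ (k - 1) : ℝ)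
  have hdown : ∑ k ∈ range N, down k = ∑ k ∈ range N, down (k + 1) := by
    have h0 : down 0 = 0 := by simp [down, sphereDegree_self]
    have hN : down N = 0 := sum_eq_zero fun i _ => by
      rw [sphereDegree_eq_zero_of_notMem fun h => lt_irrefl N (hN ⟨N, i⟩ h), Nat.cast_zero]
    have := (sum_range_succ down N).symm.trans (sum_range_succ' down N)
    rwa [h0, hN, add_zero, add_zero] at this
  rw [boundaryDegree, finsum_mem_sigma_eq_sum_range fun v hv => hN v hv.1,
    sum_congr rfl fun k _ => sum_boundary_ncard_neighborSet G' k, sum_add_distrib, hdown,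
    ← sum_add_distrib]
  refine sum_congr rfl fun k _ => ?_
  simp only [down, add_tsub_cancel_right, sum_boundary_sphereDegree_succ,
    sum_boundary_sphereDegree_pred]
  ring

theorem exists_forall_fst_lt (hfin : G'.verts.Finite) : ∃ N, ∀ v ∈ G'.verts, v.1 < N := by
  obtain ⟨M, hM⟩ := (hfin.image Sigma.fst).bddAbove
  exact ⟨M + 1, fun v hv => Nat.lt_succ_of_le (hM ⟨v, hv, rfl⟩)⟩

def crossingEdge (x : Σ k, Fin (s k) × Fin (s (k + 1))) : Sym2 (Σ n, Fin (s n)) :=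
  s(⟨x.1, x.2.1⟩, ⟨x.1 + 1, x.2.2⟩)

theorem crossingEdge_injective : Function.Injective (crossingEdge (s := s)) := by
  rintro ⟨k, i, j⟩ ⟨k', i', j'⟩ h
  simp only [crossingEdge, Sym2.eq_iff, Sigma.mk.inj_iff] at h
  rcases h with ⟨⟨rfl, hi⟩, -, hj⟩ | ⟨⟨hk, -⟩, hk', -⟩
  · rw [eq_of_heq hi, eq_of_heq hj]
  · omega

theorem edgeSet_eq_image_crossingEdge :
    G'.edgeSet = crossingEdge '' {x | G'.Adj ⟨x.1, x.2.1⟩ ⟨x.1 + 1, x.2.2⟩} := by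
  ext e
  induction e with
  | h v w =>
    obtain ⟨n, i⟩ := v
    obtain ⟨m, j⟩ := w
    simp only [Subgraph.mem_edgeSet, Set.mem_image, Set.mem_ofPred_eq, crossingEdge]
    constructor
    · intro h
      rcases G'.adj_sub h with rfl | rfl
      · exact ⟨⟨m, j, i⟩, G'.adj_symm h, Sym2.eq_swap⟩
      · exact ⟨⟨n, i, j⟩, h, rfl⟩
    · rintro ⟨⟨k, i', j'⟩, h, he⟩
      rcases Sym2.eq_iff.mp he with ⟨h₁, h₂⟩ | ⟨h₁, h₂⟩
      · rwa [← h₁, ← h₂]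
      · rw [← h₁, ← h₂]
        exact G'.adj_symm h

noncomputable def volume (ℓ : ℕ → ℝ) : ℝ :=
  ∑ᶠ e ∈ G'.edgeSet, antitreeEdgeLength s ℓ e

theorem volume_eq_sum (ℓ : ℕ → ℝ) {N : ℕ} (hN : ∀ v ∈ G'.verts, v.1 < N) :
    volume G' ℓ = ∑ k ∈ range N, (crossingCount G' k : ℝ) * ℓ k := by
  rw [volume, edgeSet_eq_image_crossingEdge, finsum_mem_image crossingEdge_injective.injOn,
    finsum_mem_sigma_eq_sum_range (S := {x : Σ k, Fin (s k) × Fin (s (k + 1)) |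
      G'.Adj ⟨x.1, x.2.1⟩ ⟨x.1 + 1, x.2.2⟩}) fun x hx => hN ⟨x.1, x.2.1⟩ (G'.edge_vert hx)]
  refine sum_congr rfl fun k _ => ?_
  simp [crossingEdge, antitreeEdgeLength, crossingCount]

theorem volume_pos {ℓ : ℕ → ℝ} (hℓ : ∀ n, 0 < ℓ n) (hfin : G'.verts.Finite)
    (hedge : G'.edgeSet.Nonempty) : 0 < volume G' ℓ := by
  obtain ⟨N, hN⟩ := exists_forall_fst_lt G' hfin
  obtain ⟨e, he⟩ := hedge
  rw [edgeSet_eq_image_crossingEdge] at he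
  obtain ⟨⟨k, p⟩, hp, -⟩ := he
  have hk : (crossingCount G' k : ℝ) * ℓ k > 0 := by
    have : 0 < crossingCount G' k := card_pos.mpr ⟨p, mem_filter.mpr ⟨mem_univ _, hp⟩⟩
    have := hℓ k
    positivity
  rw [volume_eq_sum G' ℓ hN]
  exact sum_pos' (fun k _ => mul_nonneg (Nat.cast_nonneg _) (hℓ k).le)
    ⟨k, mem_range.mpr (hN _ (G'.edge_vert hp)), hk⟩

theorem isBoundary_of_sphereDegree_succ_eq_zero (hs : ∀ n, 1 ≤ s n) {k : ℕ} {i : Fin (s k)}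
    (h : sphereDegree G' ⟨k, i⟩ (k + 1) = 0) : IsBoundary G' ⟨k, i⟩ := by
  by_contra hi
  have := sphereDegree_eq_top_of_not_isBoundary hi (k + 1)
  rw [h, sphereDegree_top (Or.inr rfl)] at this
  exact (hs (k + 1)).not_gt (this ▸ Nat.zero_lt_one)

theorem interiorCount_eq_zero (hs : ∀ n, 1 ≤ s n) {k : ℕ}
    (h : ∀ i, sphereDegree G' ⟨k, i⟩ (k + 1) = 0) : interiorCount G' k = 0 := by
  simp only [interiorCount, card_eq_zero, filter_eq_empty_iff, not_not]
  exact fun i _ => isBoundary_of_sphereDegree_succ_eq_zero G' hs (h i)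

theorem le_boundaryDegree_div_volume {ℓ : ℕ → ℝ} (hs : ∀ n, 1 ≤ s n) (hℓ : ∀ n, 0 < ℓ n)
    {c : ℝ} (hc : 0 ≤ c)
    (hcσ : ∀ k, c * ∑ j ∈ range (k + 1), (s j : ℝ) * s (j + 1) * ℓ j ≤ s k * s (k + 1))
    (hfin : G'.verts.Finite) (hedge : G'.edgeSet.Nonempty) :
    c ≤ boundaryDegree G' / volume G' ℓ := by
  obtain ⟨N, hN⟩ := exists_forall_fst_lt G' hfin
  have hIN : interiorCount G' N = 0 := interiorCount_eq_zero G' hs fun i =>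
    sphereDegree_eq_zero_of_notMem (fun h => lt_irrefl N (hN ⟨N, i⟩ h)) _
  rw [le_div_iff₀ (volume_pos G' hℓ hfin hedge), volume_eq_sum G' ℓ hN,
    boundaryDegree_eq_sum G' hN]
  exact mul_sum_le_of_potential (E := fun k => (crossingCount G' k : ℝ))
    (I := fun k => (interiorCount G' k : ℝ)) (fun k => by exact_mod_cast hs k) (fun k => (hℓ k).le)
    hc hcσ (fun k => by exact_mod_cast interiorCount_mul_le_crossingCount G' k)
    (fun k => by exact_mod_cast interiorCount_succ_mul_le_crossingCount G' k)
    (by exact_mod_cast hIN)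

end subgraph

section ball

variable (s) in
def ball (n : ℕ) : (antitreeGraph s).Subgraph :=
  (⊤ : (antitreeGraph s).Subgraph).induce {v | v.1 ≤ n + 1}

theorem ball_adj {n : ℕ} {v w : Σ n, Fin (s n)} :
    (ball s n).Adj v w ↔ v.1 ≤ n + 1 ∧ w.1 ≤ n + 1 ∧ (antitreeGraph s).Adj v w := Iff.rfl

theorem fst_lt_of_mem_ball_verts {n : ℕ} {v : Σ n, Fin (s n)} (hv : v ∈ (ball s n).verts) :
    v.1 < n + 2 :=
  Nat.lt_succ_of_le hv

theorem ball_verts_finite (n : ℕ) : (ball s n).verts.Finite :=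
  ((range (n + 2)).sigma fun _ => univ).finite_toSet.subset fun v (hv : v.1 ≤ n + 1) => by
    simp only [coe_sigma, coe_range, coe_univ, Set.mem_sigma_iff, Set.mem_Iio, Set.mem_univ,
      and_true]
    omega

theorem ball_edgeSet_nonempty (hs : ∀ n, 1 ≤ s n) (n : ℕ) : (ball s n).edgeSet.Nonempty :=
  ⟨s(⟨n, ⟨0, hs n⟩⟩, ⟨n + 1, ⟨0, hs (n + 1)⟩⟩),
    Subgraph.mem_edgeSet.mpr (ball_adj.mpr ⟨Nat.le_succ n, le_rfl, Or.inr rfl⟩)⟩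

theorem ball_connected (hs : ∀ n, 1 ≤ s n) (n : ℕ) :
    ((antitreeGraph s).induce (ball s n).verts).Connected := by
  set H := (antitreeGraph s).induce (ball s n).verts
  let vertex (k : ℕ) (i : Fin (s k)) (hk : k ≤ n + 1) : (ball s n).verts := ⟨⟨k, i⟩, hk⟩
  let root := vertex 0 ⟨0, hs 0⟩ (Nat.zero_le _)
  have reach (k : ℕ) (i : Fin (s k)) (hk : k ≤ n + 1) : H.Reachable root (vertex k i hk) := by
    induction k with
    | zero =>
      have h₁ : H.Adj root (vertex 1 ⟨0, hs 1⟩ (by omega)) := Or.inr rfl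
      have h₂ : H.Adj (vertex 1 ⟨0, hs 1⟩ (by omega)) (vertex 0 i hk) := Or.inl rfl
      exact h₁.reachable.trans h₂.reachable
    | succ k ih =>
      have h : H.Adj (vertex k ⟨0, hs k⟩ (by omega)) (vertex (k + 1) i hk) := Or.inr rfl
      exact (ih ⟨0, hs k⟩ (by omega)).trans h.reachable
  have : Nonempty (ball s n).verts := ⟨root⟩
  exact ⟨fun ⟨⟨k, i⟩, hk⟩ ⟨⟨m, j⟩, hm⟩ => (reach k i hk).symm.trans (reach m j hm)⟩

theorem crossingCount_ball (n k : ℕ) :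
    crossingCount (ball s n) k = if k ≤ n then s k * s (k + 1) else 0 := by
  split_ifs with hk
  · simp [crossingCount, ball_adj, antitreeGraph, hk, Nat.le_succ_of_le hk]
  · simp [crossingCount, ball_adj]
    omega

theorem interiorCount_ball (hs : ∀ n, 1 ≤ s n) (n k : ℕ) :
    interiorCount (ball s n) k = if k ≤ n then s k else 0 := by
  split_ifs with hk
  · simp only [interiorCount, not_isBoundary_iff]
    rw [filter_true_of_mem fun i _ => ?_, card_univ, Fintype.card_fin]
    ext w
    simp only [Subgraph.mem_neighborSet, mem_neighborSet, ball_adj]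
    refine ⟨fun h => h.2.2, fun h => ⟨by omega, ?_, h⟩⟩
    rcases h with h | h <;> dsimp only at h <;> omega
  · refine interiorCount_eq_zero _ hs fun i => ?_
    simp [sphereDegree, ball_adj]
    omega

theorem boundaryDegree_ball (hs : ∀ n, 1 ≤ s n) (n : ℕ) :
    boundaryDegree (ball s n) = s n * s (n + 1) := by
  rw [boundaryDegree_eq_sum _ fun _ => fst_lt_of_mem_ball_verts, sum_range_succ,
    sum_range_succ, sum_eq_zero fun k hk => ?_]
  · simp [crossingCount_ball, interiorCount_ball hs]
    ring
  · have hk : k < n := mem_range.mp hk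
    simp [crossingCount_ball, interiorCount_ball hs, hk.le, Nat.succ_le_of_lt hk]
    ring

theorem volume_ball (n : ℕ) (ℓ : ℕ → ℝ) :
    volume (ball s n) ℓ = ∑ k ∈ range (n + 1), (s k : ℝ) * s (k + 1) * ℓ k := by
  rw [volume_eq_sum _ ℓ fun _ => fst_lt_of_mem_ball_verts, sum_range_succ]
  simp only [crossingCount_ball, if_neg (Nat.not_succ_le_self n), Nat.cast_zero, zero_mul,
    add_zero]
  refine sum_congr rfl fun k hk => ?_
  rw [if_pos (Nat.lt_succ_iff.mp (mem_range.mp hk)), Nat.cast_mul]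

end ball

variable (s) in
def isoperimetricRatios (ℓ : ℕ → ℝ) : Set ℝ :=
  {r | ∃ G' : (antitreeGraph s).Subgraph, G'.verts.Finite ∧ G'.edgeSet.Nonempty ∧
    ((antitreeGraph s).induce G'.verts).Connected ∧ r = boundaryDegree G' / volume G' ℓ}

theorem ball_ratio_mem_isoperimetricRatios (hs : ∀ n, 1 ≤ s n) (ℓ : ℕ → ℝ) (n : ℕ) :
    (s n : ℝ) * s (n + 1) / volume (ball s n) ℓ ∈ isoperimetricRatios s ℓ :=
  ⟨ball s n, ball_verts_finite n, ball_edgeSet_nonempty hs n, ball_connected hs n, by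
    rw [boundaryDegree_ball hs]⟩

theorem isGLB_isoperimetricRatios {ℓ : ℕ → ℝ} (hs : ∀ n, 1 ≤ s n) (hℓ : ∀ n, 0 < ℓ n) :
    IsGLB (isoperimetricRatios s ℓ) (⨅ n, (s n : ℝ) * s (n + 1) / volume (ball s n) ℓ) := by
  have hvol (n : ℕ) : 0 < volume (ball s n) ℓ :=
    volume_pos _ hℓ (ball_verts_finite n) (ball_edgeSet_nonempty hs n)
  have hratio (n : ℕ) : 0 ≤ (s n : ℝ) * s (n + 1) / volume (ball s n) ℓ :=
    div_nonneg (by positivity) (hvol n).le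
  refine ⟨?_, fun b hb => le_ciInf fun n => hb (ball_ratio_mem_isoperimetricRatios hs ℓ n)⟩
  rintro r ⟨G', hfin, hedge, -, rfl⟩
  refine le_boundaryDegree_div_volume G' hs hℓ (le_ciInf hratio) (fun k => ?_) hfin hedge
  rw [← volume_ball, ← le_div_iff₀ (hvol k)]
  exact ciInf_le ⟨0, Set.forall_mem_range.mpr hratio⟩ k

end Antitree

theorem antitree_isoperimetric_constant_general (s : ℕ → ℕ)
    (hs : ∀ n, 1 ≤ s n) (ℓ : ℕ → ℝ) (hℓ : ∀ n, 0 < ℓ n) :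
    sInf { r : ℝ |
      ∃ G' : (antitreeGraph s).Subgraph,
        G'.verts.Finite ∧ G'.edgeSet.Nonempty ∧
        ((antitreeGraph s).induce G'.verts).Connected ∧
        r = (∑ᶠ v ∈ { v ∈ G'.verts |
                (G'.neighborSet v).ncard < ((antitreeGraph s).neighborSet v).ncard },
              ((G'.neighborSet v).ncard : ℝ)) /
            (∑ᶠ e ∈ G'.edgeSet, antitreeEdgeLength s ℓ e) } =
    ⨅ n : ℕ, ((s n : ℝ) * (s (n + 1) : ℝ)) /
      (∑ k ∈ Finset.range (n + 1), (s k : ℝ) * (s (k + 1) : ℝ) * ℓ k) := by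
  change sInf (Antitree.isoperimetricRatios s ℓ) = _
  simp only [← Antitree.volume_ball]
  exact (Antitree.isGLB_isoperimetricRatios hs hℓ).csInf_eq
    ⟨_, Antitree.ball_ratio_mem_isoperimetricRatios hs ℓ 0⟩

/-- Theorem 7.1.  The isoperimetric constant of a radially
symmetric antitree equals `inf_n sₙ sₙ₊₁ / (Σ_{k ≤ n} sₖ sₖ₊₁ ℓₖ)`.  The
infimum on the left runs over all subgraphs with finitely many vertices, at
least one edge, and whose induced graph on the vertex set is connected;
`deg(∂G')` is the sum over boundary vertices of their degree in `G'`, and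
`vol(G')` is the total length of the edges of `G'`. -/
theorem antitree_isoperimetric_constant (s : ℕ → ℕ) (hs0 : s 0 = 1)
    (hs : ∀ n, 1 ≤ s n) (ℓ : ℕ → ℝ) (hℓ : ∀ n, 0 < ℓ n) :
    sInf { r : ℝ |
      ∃ G' : (antitreeGraph s).Subgraph,
        G'.verts.Finite ∧ G'.edgeSet.Nonempty ∧
        ((antitreeGraph s).induce G'.verts).Connected ∧
        r = (∑ᶠ v ∈ { v ∈ G'.verts |
                (G'.neighborSet v).ncard < ((antitreeGraph s).neighborSet v).ncard },
              ((G'.neighborSet v).ncard : ℝ)) /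
            (∑ᶠ e ∈ G'.edgeSet, antitreeEdgeLength s ℓ e) } =
    ⨅ n : ℕ, ((s n : ℝ) * (s (n + 1) : ℝ)) /
      (∑ k ∈ Finset.range (n + 1), (s k : ℝ) * (s (k + 1) : ℝ) * ℓ k) :=
  antitree_isoperimetric_constant_general s hs ℓ hℓ
end
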